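/- arXiv:2112.11149 — 3 statements merged into one kernel-verified Lean document; each statement's English description precedes it below -/
import Mathlib

section
/- If the set O of observable measures is countably infinite, then there are countably infinitely many physical measures such that the union of their basins of attraction covers X Leb-almost everywhere; moreover in this case O equals the weak* closure of the set Phy of physical measures. -/
open MeasureTheory Filter Topology
open scoped ENNReal

/-- The empirical probability measure `γ_{n+1,x} = (1/(n+1)) ∑_{j≤n} δ_{T^j x}` of the orbit
of `x` (indexed so that it is a probability measure for every index). -/
noncomputable def empiricalPM {X : Type*} [MeasurableSpace X] (T : X → X) (x : X) (n : ℕ) :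
    MeasureTheory.ProbabilityMeasure X :=
  ⟨(n + 1 : ℝ≥0∞)⁻¹ • ∑ j ∈ Finset.range (n + 1), MeasureTheory.Measure.dirac (T^[j] x), by
    constructor
    rw [Measure.smul_apply, Measure.finset_sum_apply]
    simp
    rw [ENNReal.inv_mul_cancel] <;> simp⟩

/-- The set `V(x)` of weak* limit points of the sequence of empirical measures of `x`. -/
def limitSet {X : Type*} [MeasurableSpace X] [TopologicalSpace X] [OpensMeasurableSpace X]
    (T : X → X) (x : X) : Set (MeasureTheory.ProbabilityMeasure X) :=
  {μ | ∃ φ : ℕ → ℕ, StrictMono φ ∧ Tendsto (fun j => empiricalPM T x (φ j)) atTop (𝓝 μ)}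

/-- `μ` is an observable (physical-like) measure for `(X, T, Leb)`: every weak* neighbourhood
`U` of `μ` (equivalently, every ε-ball around `μ` in a compatible metric) is intersected by
`V(x)` for a positive `Leb`-measure set of points `x`. -/
def IsObservable {X : Type*} [MeasurableSpace X] [TopologicalSpace X] [OpensMeasurableSpace X]
    (Leb : MeasureTheory.Measure X) (T : X → X) (μ : MeasureTheory.ProbabilityMeasure X) : Prop :=
  ∀ U : Set (MeasureTheory.ProbabilityMeasure X), IsOpen U → μ ∈ U →
    0 < Leb {x | (limitSet T x ∩ U).Nonempty}

/-- The Lyapunov exponent `χ(μ, Φ) = lim_n (1/n) ∫ log φ_n dμ` of a potential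
`Φ = {log φ_n}` (for invariant `μ` the limit exists by subadditivity, so it equals the
`liminf` used here); it takes values in `[-∞, ∞)`, i.e. in `EReal`. -/
noncomputable def lyapExp {X : Type*} [MeasurableSpace X] (φ : ℕ → X → ℝ)
    (μ : MeasureTheory.Measure X) : EReal :=
  liminf (fun n : ℕ => (((n : ℝ)⁻¹ * ∫ x, Real.log (φ n x) ∂μ : ℝ) : EReal)) atTop

/-- `μ` is a physical measure: its basin of attraction `B(μ) = {x : V(x) = {μ}}` has positive
`Leb`-measure. -/
def IsPhysical {X : Type*} [MeasurableSpace X] [TopologicalSpace X] [OpensMeasurableSpace X]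
    (Leb : MeasureTheory.Measure X) (T : X → X) (μ : MeasureTheory.ProbabilityMeasure X) : Prop :=
  0 < Leb {x | limitSet T x = {μ}}


-- ===== auxiliary development =====
set_option linter.unusedSectionVars false
set_option linter.unusedVariables false
open MeasureTheory Filter Topology BoundedContinuousFunction Set Metric TopologicalSpace
open scoped ENNReal NNReal

section RieszContent

variable {X : Type*} [MetricSpace X] [CompactSpace X] [MeasurableSpace X] [BorelSpace X]

/-- The set of test functions for a compact set. -/
def testFns (K : Set X) : Set (X →ᵇ ℝ) := {f | (∀ x, 0 ≤ f x) ∧ ∀ x ∈ K, 1 ≤ f x}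

lemma one_mem_testFns (K : Set X) : (1 : X →ᵇ ℝ) ∈ testFns K :=
  ⟨fun _ => zero_le_one, fun _ _ => le_rfl⟩

variable (A : (X →ᵇ ℝ) → ℝ)
  (hadd : ∀ f g, A (f + g) = A f + A g)
  (hmono : ∀ f g : X →ᵇ ℝ, (∀ x, f x ≤ g x) → A f ≤ A g)

/-- Riesz-type content associated to a positive functional. -/
noncomputable def rcAux (K : Set X) : ℝ := sInf (A '' testFns K)

section lemmas
include hadd hmono

lemma A_zero : A 0 = 0 := by have := hadd 0 0; simp at this; linarith

lemma A_nonneg_mem {K : Set X} {r : ℝ} (hr : r ∈ A '' testFns K) : 0 ≤ r := by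
  obtain ⟨f, hf, rfl⟩ := hr
  have := hmono 0 f (by simpa using hf.1)
  rwa [A_zero A hadd hmono] at this

lemma rcAux_bddBelow (K : Set X) : BddBelow (A '' testFns K) :=
  ⟨0, fun r hr => A_nonneg_mem A hadd hmono hr⟩

lemma rcAux_image_nonempty (K : Set X) : (A '' testFns K).Nonempty :=
  ⟨A 1, ⟨1, one_mem_testFns K, rfl⟩⟩

lemma rcAux_nonneg (K : Set X) : 0 ≤ rcAux A K :=
  le_csInf (rcAux_image_nonempty A hadd hmono _) (fun r hr => A_nonneg_mem A hadd hmono hr)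

lemma rcAux_le {K : Set X} {f : X →ᵇ ℝ} (hf : f ∈ testFns K) : rcAux A K ≤ A f :=
  csInf_le (rcAux_bddBelow A hadd hmono K) ⟨f, hf, rfl⟩

lemma rcAux_mono {K₁ K₂ : Set X} (h : K₁ ⊆ K₂) : rcAux A K₁ ≤ rcAux A K₂ :=
  csInf_le_csInf (rcAux_bddBelow A hadd hmono K₁) (rcAux_image_nonempty A hadd hmono _)
    (image_mono (fun f hf => ⟨hf.1, fun x hx => hf.2 x (h hx)⟩))

lemma rcAux_union_le (K₁ K₂ : Set X) :
    rcAux A (K₁ ∪ K₂) ≤ rcAux A K₁ + rcAux A K₂ := by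
  have key : ∀ f₁ ∈ testFns K₁, ∀ f₂ ∈ testFns K₂,
      rcAux A (K₁ ∪ K₂) ≤ A f₁ + A f₂ := by
    intro f₁ h₁ f₂ h₂
    have : f₁ + f₂ ∈ testFns (K₁ ∪ K₂) := by
      constructor
      · intro x; have := h₁.1 x; have := h₂.1 x
        simp only [BoundedContinuousFunction.coe_add, Pi.add_apply]; linarith
      · rintro x (hx | hx)
        · have := h₁.2 x hx; have := h₂.1 x
          simp only [BoundedContinuousFunction.coe_add, Pi.add_apply]; linarith
        · have := h₂.2 x hx; have := h₁.1 x
          simp only [BoundedContinuousFunction.coe_add, Pi.add_apply]; linarith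
    calc rcAux A (K₁ ∪ K₂) ≤ A (f₁ + f₂) := rcAux_le A hadd hmono this
    _ = A f₁ + A f₂ := hadd f₁ f₂
  have step1 : ∀ f₂ ∈ testFns K₂, rcAux A (K₁ ∪ K₂) - A f₂ ≤ rcAux A K₁ := by
    intro f₂ h₂
    apply le_csInf (rcAux_image_nonempty A hadd hmono _)
    rintro r ⟨f₁, h₁, rfl⟩
    linarith [key f₁ h₁ f₂ h₂]
  have step2 : rcAux A (K₁ ∪ K₂) - rcAux A K₁ ≤ rcAux A K₂ := by
    apply le_csInf (rcAux_image_nonempty A hadd hmono _)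
    rintro r ⟨f₂, h₂, rfl⟩
    linarith [step1 f₂ h₂]
  linarith

lemma rcAux_union_disjoint {K₁ K₂ : Set X} (hK₁ : IsCompact K₁) (hK₂ : IsCompact K₂)
    (hd : Disjoint K₁ K₂) :
    rcAux A (K₁ ∪ K₂) = rcAux A K₁ + rcAux A K₂ := by
  refine le_antisymm (rcAux_union_le A hadd hmono K₁ K₂) ?_
  apply le_csInf (rcAux_image_nonempty A hadd hmono _)
  rintro r ⟨f, hf, rfl⟩
  obtain ⟨u, hu0, hu1, hu01⟩ :=
    exists_continuous_zero_one_of_isClosed hK₂.isClosed hK₁.isClosed hd.symm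
  set ub : X →ᵇ ℝ := BoundedContinuousFunction.mkOfCompact u with hub
  have hub_apply : ∀ x, ub x = u x := fun x => rfl
  have hg : f = f * ub + f * (1 - ub) := by ring
  have h₁ : f * ub ∈ testFns K₁ := by
    constructor
    · intro x
      simp only [BoundedContinuousFunction.coe_mul, Pi.mul_apply]
      exact mul_nonneg (hf.1 x) (by rw [hub_apply]; exact (hu01 x).1)
    · intro x hx
      have : ub x = 1 := by rw [hub_apply]; exact hu1 hx
      simp only [BoundedContinuousFunction.coe_mul, Pi.mul_apply, this, mul_one]
      exact hf.2 x (Or.inl hx)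
  have h₂ : f * (1 - ub) ∈ testFns K₂ := by
    constructor
    · intro x
      simp only [BoundedContinuousFunction.coe_mul, Pi.mul_apply,
        BoundedContinuousFunction.coe_sub, BoundedContinuousFunction.coe_one, Pi.sub_apply,
        Pi.one_apply]
      exact mul_nonneg (hf.1 x) (by rw [hub_apply]; linarith [(hu01 x).2])
    · intro x hx
      have : ub x = 0 := by rw [hub_apply]; exact hu0 hx
      simp only [BoundedContinuousFunction.coe_mul, Pi.mul_apply,
        BoundedContinuousFunction.coe_sub, BoundedContinuousFunction.coe_one, Pi.sub_apply,
        Pi.one_apply, this, sub_zero, mul_one]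
      exact hf.2 x (Or.inr hx)
  calc rcAux A K₁ + rcAux A K₂ ≤ A (f * ub) + A (f * (1 - ub)) :=
        add_le_add (rcAux_le A hadd hmono h₁) (rcAux_le A hadd hmono h₂)
  _ = A (f * ub + f * (1 - ub)) := (hadd _ _).symm
  _ = A f := by rw [← hg]

/-- The content associated to the functional `A`. -/
noncomputable def rieszCont : Content X where
  toFun K := Real.toNNReal (rcAux A K)
  mono' K₁ K₂ h := Real.toNNReal_mono (rcAux_mono A hadd hmono h)
  sup_disjoint' K₁ K₂ hd _ _ := by
    have h := rcAux_union_disjoint A hadd hmono (K₁ := (K₁ : Set X)) (K₂ := (K₂ : Set X))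
      K₁.2 K₂.2 hd
    simp only [Compacts.coe_sup]
    rw [h, Real.toNNReal_add (rcAux_nonneg A hadd hmono _) (rcAux_nonneg A hadd hmono _)]
  sup_le' K₁ K₂ := by
    simp only [Compacts.coe_sup]
    refine le_trans (Real.toNNReal_mono (rcAux_union_le A hadd hmono K₁ K₂)) ?_
    rw [Real.toNNReal_add (rcAux_nonneg A hadd hmono _) (rcAux_nonneg A hadd hmono _)]

lemma rieszCont_univ (hone : A 1 = 1) :
    rieszCont A hadd hmono ⟨univ, isCompact_univ⟩ = 1 := by
  have h1 : rcAux A univ = 1 := by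
    refine le_antisymm ?_ ?_
    · have := rcAux_le A hadd hmono (one_mem_testFns (univ : Set X))
      rwa [hone] at this
    · apply le_csInf (rcAux_image_nonempty A hadd hmono _)
      rintro r ⟨f, hf, rfl⟩
      have := hmono 1 f (fun x => hf.2 x (mem_univ x))
      rwa [hone] at this
  show ((Real.toNNReal (rcAux A univ) : ℝ≥0) : ℝ≥0∞) = 1
  rw [h1]; simp

lemma rieszCont_measure_univ (hone : A 1 = 1) :
    (rieszCont A hadd hmono).measure univ = 1 := by
  rw [Content.measure_apply _ MeasurableSet.univ,
    Content.outerMeasure_of_isOpen _ _ isOpen_univ]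
  have : (rieszCont A hadd hmono).innerContent ⟨univ, isOpen_univ⟩
      = rieszCont A hadd hmono ⟨univ, isCompact_univ⟩ := by
    refine le_antisymm ?_ ?_
    · exact iSup₂_le fun K _ =>
        ENNReal.coe_le_coe.2 ((rieszCont A hadd hmono).mono' _ _ (subset_univ _))
    · exact le_iSup₂_of_le ⟨univ, isCompact_univ⟩ subset_rfl le_rfl
  rw [this, rieszCont_univ A hadd hmono hone]

end lemmas

end RieszContent

section SeqCompact

variable {X : Type*} [MetricSpace X] [CompactSpace X] [MeasurableSpace X] [BorelSpace X]

lemma abs_integral_le_norm (μ : Measure X) [IsProbabilityMeasure μ] (f : X →ᵇ ℝ) :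
    |∫ x, f x ∂μ| ≤ ‖f‖ := by
  have h := norm_integral_le_of_norm_le_const (μ := μ) (f := fun x => f x) (C := ‖f‖)
    (Eventually.of_forall fun x => f.norm_coe_le_norm x)
  simpa [measure_univ] using h

lemma abs_integral_sub_le (μ : Measure X) [IsProbabilityMeasure μ] (f g : X →ᵇ ℝ) :
    |(∫ x, f x ∂μ) - ∫ x, g x ∂μ| ≤ dist f g := by
  rw [← integral_sub (f.integrable μ) (g.integrable μ)]
  have h := norm_integral_le_of_norm_le_const (μ := μ) (f := fun x => f x - g x) (C := dist f g)
    (Eventually.of_forall fun x => by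
      simpa [Real.dist_eq] using BoundedContinuousFunction.dist_coe_le_dist (f := f) (g := g) x)
  simpa [measure_univ] using h

lemma exists_conv_subseq (μs : ℕ → ProbabilityMeasure X) :
    ∃ (μ : ProbabilityMeasure X) (φ : ℕ → ℕ), StrictMono φ ∧
      Tendsto (μs ∘ φ) atTop (𝓝 μ) := by
  have hne : Nonempty X := by
    rcases isEmpty_or_nonempty X with h | h
    · exfalso
      have h1 := (μs 0).2.measure_univ
      rw [Set.univ_eq_empty_iff.2 h] at h1
      simp at h1
    · exact h
  haveI : SeparableSpace (X →ᵇ ℝ) :=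
    ((ContinuousMap.isometryEquivBoundedOfCompact X ℝ).surjective.denseRange).separableSpace
      (ContinuousMap.isometryEquivBoundedOfCompact X ℝ).continuous
  obtain ⟨D, Dcnt, Ddense⟩ := exists_countable_dense (X →ᵇ ℝ)
  obtain ⟨f, hf⟩ := Dcnt.exists_eq_range Ddense.nonempty
  set g : ℕ → Π i : ℕ, (Icc (-‖f i‖) ‖f i‖ : Set ℝ) := fun k i =>
    ⟨∫ x, f i x ∂(μs k), mem_Icc.2 (abs_le.1 (abs_integral_le_norm _ _))⟩ with hg
  obtain ⟨L, φ, hφ, hLconv⟩ := CompactSpace.tendsto_subseq g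
  have hcoord : ∀ i, Tendsto (fun k => ∫ x, f i x ∂(μs (φ k))) atTop (𝓝 ((L i : ℝ))) := by
    intro i
    have h1 : Tendsto (fun k => (g ∘ φ) k i) atTop (𝓝 (L i)) := tendsto_pi_nhds.mp hLconv i
    exact (continuous_subtype_val.tendsto _).comp h1
  have hCauchy : ∀ F : X →ᵇ ℝ, ∃ l : ℝ, Tendsto (fun k => ∫ x, F x ∂(μs (φ k))) atTop (𝓝 l) := by
    intro F
    apply cauchySeq_tendsto_of_complete
    rw [Metric.cauchySeq_iff]
    intro ε hε
    obtain ⟨d, hdD, hdist⟩ := Ddense.exists_dist_lt F (show (0:ℝ) < ε/3 by linarith)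
    obtain ⟨i, rfl⟩ : ∃ i, f i = d := by
      rw [hf] at hdD; obtain ⟨i, hi⟩ := hdD; exact ⟨i, hi⟩
    obtain ⟨N, hN⟩ := Metric.cauchySeq_iff.1 (hcoord i).cauchySeq (ε/3) (by linarith)
    refine ⟨N, fun m hm n hn => ?_⟩
    have h1 := abs_integral_sub_le (μs (φ m)) F (f i)
    have h2 := hN m hm n hn
    have h3 := abs_integral_sub_le (μs (φ n)) (f i) F
    rw [Real.dist_eq] at h2 ⊢
    have hd1 : dist F (f i) < ε/3 := hdist
    have hd2 : dist (f i) F < ε/3 := by rwa [dist_comm] at hd1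
    calc |(∫ x, F x ∂(μs (φ m))) - ∫ x, F x ∂(μs (φ n))|
        ≤ |(∫ x, F x ∂(μs (φ m))) - ∫ x, f i x ∂(μs (φ m))|
          + |(∫ x, f i x ∂(μs (φ m))) - ∫ x, F x ∂(μs (φ n))| := abs_sub_le _ _ _
    _ ≤ |(∫ x, F x ∂(μs (φ m))) - ∫ x, f i x ∂(μs (φ m))|
          + (|(∫ x, f i x ∂(μs (φ m))) - ∫ x, f i x ∂(μs (φ n))|
          + |(∫ x, f i x ∂(μs (φ n))) - ∫ x, F x ∂(μs (φ n))|) := by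
            linarith [abs_sub_le (∫ x, f i x ∂(μs (φ m))) (∫ x, f i x ∂(μs (φ n)))
              (∫ x, F x ∂(μs (φ n)))]
    _ < ε := by linarith
  choose A hA using hCauchy
  have hadd : ∀ F G : X →ᵇ ℝ, A (F + G) = A F + A G := by
    intro F G
    have h1 := (hA F).add (hA G)
    have h2 : (fun k => ∫ x, (F + G) x ∂(μs (φ k)))
        = fun k => (∫ x, F x ∂(μs (φ k))) + ∫ x, G x ∂(μs (φ k)) := by
      funext k
      simp only [BoundedContinuousFunction.coe_add, Pi.add_apply]
      exact integral_add (F.integrable _) (G.integrable _)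
    exact tendsto_nhds_unique (hA (F + G)) (h2 ▸ h1)
  have hmono : ∀ F G : X →ᵇ ℝ, (∀ x, F x ≤ G x) → A F ≤ A G := fun F G h =>
    le_of_tendsto_of_tendsto' (hA F) (hA G) fun k =>
      integral_mono (F.integrable _) (G.integrable _) h
  have hone : A 1 = 1 := by
    have h2 : (fun k => ∫ x, (1 : X →ᵇ ℝ) x ∂(μs (φ k))) = fun _ => (1:ℝ) := by
      funext k
      simp [measure_univ]
    exact tendsto_nhds_unique (hA 1) (h2 ▸ tendsto_const_nhds)
  set m : Measure X := (rieszCont A hadd hmono).measure with hm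
  haveI hmp : IsProbabilityMeasure m := ⟨rieszCont_measure_univ A hadd hmono hone⟩
  set ν : ProbabilityMeasure X := ⟨m, hmp⟩ with hν
  refine ⟨ν, φ, hφ, ?_⟩
  apply tendsto_of_forall_isOpen_le_liminf
  intro G hG
  set r := atTop.liminf (fun i => (μs (φ i)) G) with hr
  have key : ∀ K : Compacts X, (K : Set X) ⊆ G →
      (rieszCont A hadd hmono) K ≤ (r : ℝ≥0∞) := by
    intro K hKG
    obtain ⟨u, hu0, hu1, hu01⟩ := exists_continuous_zero_one_of_isClosed
      (isClosed_compl_iff.2 hG) K.2.isClosed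
      (disjoint_left.2 fun x hx hxK => hx (hKG hxK))
    set ub := BoundedContinuousFunction.mkOfCompact u with hub
    have hub_mem : ub ∈ testFns (K : Set X) := ⟨fun x => (hu01 x).1, fun x hx => (hu1 hx).ge⟩
    have hbound : ∀ k, (∫ x, ub x ∂(μs (φ k) : Measure X))
        ≤ (((μs (φ k)) G : ℝ≥0) : ℝ) := by
      intro k
      have h0 : ∀ x ∉ G, ub x = 0 := fun x hx => hu0 hx
      rw [← setIntegral_eq_integral_of_forall_compl_eq_zero h0]
      have h1 : ∫ x in G, ub x ∂(μs (φ k) : Measure X)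
          ≤ ∫ _x in G, (1:ℝ) ∂(μs (φ k) : Measure X) := by
        apply setIntegral_mono_on (ub.integrable _).integrableOn
          integrableOn_const hG.measurableSet
        exact fun x _ => (hu01 x).2
      have h2 : ∫ _x in G, (1:ℝ) ∂(μs (φ k) : Measure X)
          = ((μs (φ k) : Measure X) G).toReal := by simp; rfl
      rw [h2] at h1
      refine h1.trans (le_of_eq ?_)
      rfl
    have hA_le : ∀ ε : ℝ, 0 < ε → A ub ≤ (r : ℝ) + ε := by
      intro ε hε
      by_contra hcon
      push_neg at hcon
      have hfreq : ∃ᶠ k in atTop, ((μs (φ k)) G) < r + Real.toNNReal ε := by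
        apply frequently_lt_of_liminf_lt
        · exact IsBoundedUnder.isCoboundedUnder_ge ⟨1, by simp⟩
        · rw [← hr]
          exact lt_add_of_pos_right r (by simpa using hε)
      have hev : ∀ᶠ k in atTop, (r : ℝ) + ε < ∫ x, ub x ∂(μs (φ k) : Measure X) :=
        (hA ub).eventually (eventually_gt_nhds hcon)
      obtain ⟨k, hk1, hk2⟩ := (hfreq.and_eventually hev).exists
      have h3 : (((μs (φ k)) G : ℝ≥0) : ℝ) < (r : ℝ) + ε := by
        have := NNReal.coe_lt_coe.2 hk1
        rwa [NNReal.coe_add, Real.coe_toNNReal _ hε.le] at this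
      linarith [hbound k]
    have hrc : rcAux A (K : Set X) ≤ (r : ℝ) := by
      apply le_of_forall_pos_le_add
      intro ε hε
      exact (rcAux_le A hadd hmono hub_mem).trans (hA_le ε hε)
    show ((Real.toNNReal (rcAux A (K : Set X)) : ℝ≥0) : ℝ≥0∞) ≤ (r : ℝ≥0∞)
    rw [ENNReal.coe_le_coe]
    exact Real.toNNReal_le_iff_le_coe.2 hrc
  have hmG : m G ≤ (r : ℝ≥0∞) := by
    rw [hm, Content.measure_apply _ hG.measurableSet,
      Content.outerMeasure_of_isOpen _ _ hG]
    exact iSup₂_le fun K hK => key K hK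
  show ν G ≤ r
  have hcoe : ν G = (m G).toNNReal := rfl
  rw [hcoe]
  have := ENNReal.toNNReal_mono (by simp) hmG
  simpa using this

lemma probMeasure_compactSpace : CompactSpace (ProbabilityMeasure X) := by
  letI : MetricSpace (ProbabilityMeasure X) := metrizableSpaceMetric _
  rw [compactSpace_iff_seqCompactSpace]
  refine ⟨fun x _ => ?_⟩
  obtain ⟨μ, φ, hφ, h⟩ := exists_conv_subseq x
  exact ⟨μ, mem_univ μ, φ, hφ, h⟩

end SeqCompact

section ClusterLemmas

variable {Y : Type*} [MetricSpace Y]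

lemma mapClusterPt_of_subseq {u : ℕ → Y} {y : Y} {φ : ℕ → ℕ} (hφ : StrictMono φ)
    (h : Tendsto (u ∘ φ) atTop (𝓝 y)) : MapClusterPt y atTop u := by
  have h2 : map (u ∘ φ) atTop ≤ map u atTop := by
    rw [← Filter.map_map]
    exact map_mono hφ.tendsto_atTop
  have h1 : (𝓝 y ⊓ map u atTop).NeBot := neBot_of_le (f := map (u ∘ φ) atTop) (le_inf h h2)
  exact h1

lemma exists_subseq_of_mapClusterPt {u : ℕ → Y} {y : Y} (h : MapClusterPt y atTop u) :
    ∃ φ : ℕ → ℕ, StrictMono φ ∧ Tendsto (u ∘ φ) atTop (𝓝 y) := by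
  have hfreq : ∀ n : ℕ, ∃ᶠ k in atTop, u k ∈ ball y (1 / (n + 1)) := fun n =>
    mapClusterPt_iff_frequently.1 h _ (ball_mem_nhds y (by positivity))
  obtain ⟨φ, hφ, hmem⟩ := Filter.extraction_forall_of_frequently hfreq
  refine ⟨φ, hφ, tendsto_iff_dist_tendsto_zero.2 ?_⟩
  apply squeeze_zero (fun n => dist_nonneg) (fun n => (mem_ball.1 (hmem n)).le)
  exact tendsto_one_div_add_atTop_nhds_zero_nat

lemma eventually_mem_thickening_clusterSet [CompactSpace Y] (u : ℕ → Y) {ε : ℝ} (hε : 0 < ε) :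
    ∀ᶠ n in atTop, u n ∈ thickening ε {y | MapClusterPt y atTop u} := by
  set L := {y | MapClusterPt y atTop u} with hLdef
  by_contra hcon
  rw [not_eventually] at hcon
  have hne : (atTop ⊓ 𝓟 {n | ¬ u n ∈ thickening ε L}).NeBot := by
    rwa [← frequently_iff_neBot] at *
  haveI := hne
  obtain ⟨z, hz⟩ := exists_clusterPt_of_compactSpace
    (map u (atTop ⊓ 𝓟 {n | ¬ u n ∈ thickening ε L}))
  have hz1 : MapClusterPt z atTop u := hz.mono (map_mono inf_le_left)
  have hz2 : z ∈ closure (thickening ε L)ᶜ := by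
    rw [mem_closure_iff_clusterPt]
    refine hz.mono ?_
    refine le_trans (map_mono inf_le_right) ?_
    rw [map_principal]
    exact principal_mono.2 (by rintro _ ⟨n, hn, rfl⟩; exact hn)
  rw [IsClosed.closure_eq (isClosed_compl_iff.2 isOpen_thickening)] at hz2
  exact hz2 (self_subset_thickening hε L hz1)

lemma clusterSet_preconnected [CompactSpace Y] (u : ℕ → Y)
    (hstep : Tendsto (fun n => dist (u n) (u (n + 1))) atTop (𝓝 0)) :
    IsPreconnected {y | MapClusterPt y atTop u} := by
  set L := {y | MapClusterPt y atTop u} with hLdef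
  have hLclosed : IsClosed L := isClosed_setOf_clusterPt
  rintro U V hU hV hLUV ⟨a, haL, haU⟩ ⟨b, hbL, hbV⟩
  by_contra hempty
  have hnotUV : ∀ y ∈ L, ¬(y ∈ U ∧ y ∈ V) := fun y hy hyUV => hempty ⟨y, hy, hyUV.1, hyUV.2⟩
  set A := L ∩ Vᶜ with hA
  set B := L ∩ Uᶜ with hB
  have hAB : A ∪ B = L := by
    apply Subset.antisymm (union_subset inter_subset_left inter_subset_left)
    intro y hy
    rcases hLUV hy with h | h
    · exact Or.inl ⟨hy, fun hyV => hnotUV y hy ⟨h, hyV⟩⟩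
    · exact Or.inr ⟨hy, fun hyU => hnotUV y hy ⟨hyU, h⟩⟩
  have haA : a ∈ A := ⟨haL, fun h => hnotUV a haL ⟨haU, h⟩⟩
  have hbB : b ∈ B := ⟨hbL, fun h => hnotUV b hbL ⟨h, hbV⟩⟩
  have hAc : IsCompact A := (hLclosed.inter hV.isClosed_compl).isCompact
  have hBc : IsClosed B := hLclosed.inter hU.isClosed_compl
  have hdisj : Disjoint A B := by
    rw [disjoint_left]
    rintro y ⟨hyL, hyV⟩ ⟨_, hyU⟩
    rcases hLUV hyL with h | h
    exacts [hyU h, hyV h]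
  obtain ⟨δ, hδ, hTdisj⟩ := hdisj.exists_thickenings hAc hBc
  have hTdisj2 : Disjoint (thickening (δ/2) A) (thickening (δ/2) B) :=
    hTdisj.mono (thickening_mono (by linarith) A) (thickening_mono (by linarith) B)
  have hev1 : ∀ᶠ n in atTop, u n ∈ thickening (δ/2) A ∪ thickening (δ/2) B := by
    filter_upwards [eventually_mem_thickening_clusterSet u
      (show (0:ℝ) < δ/2 by linarith) (ε := δ/2)] with n hn
    rw [← thickening_union]
    rw [← hLdef] at hn
    rw [← hAB] at hn
    exact hn
  have hev2 : ∀ᶠ n in atTop, dist (u n) (u (n+1)) < δ/2 :=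
    hstep.eventually (eventually_lt_nhds (by linarith))
  obtain ⟨N, hN⟩ := eventually_atTop.1 (hev1.and hev2)
  have hlock : ∀ n, N ≤ n → u n ∈ thickening (δ/2) A → u (n+1) ∈ thickening (δ/2) A := by
    intro n hn hun
    rcases (hN (n+1) (by omega)).1 with h | h
    · exact h
    · exfalso
      obtain ⟨z, hzA, hdz⟩ := mem_thickening_iff.1 hun
      have hmem : u (n+1) ∈ thickening δ A := by
        refine mem_thickening_iff.2 ⟨z, hzA, ?_⟩
        have h2 := (hN n hn).2
        calc dist (u (n+1)) z ≤ dist (u (n+1)) (u n) + dist (u n) z := dist_triangle _ _ _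
        _ < δ/2 + δ/2 := add_lt_add (by rwa [dist_comm]) hdz
        _ = δ := by ring
      exact hTdisj.le_bot ⟨hmem, thickening_mono (by linarith) B h⟩
  have hstay : ∀ n₀, N ≤ n₀ → u n₀ ∈ thickening (δ/2) A →
      ∀ n, n₀ ≤ n → u n ∈ thickening (δ/2) A := by
    intro n₀ hn₀ h0 n hn
    induction n, hn using Nat.le_induction with
    | base => exact h0
    | succ n hn ih => exact hlock n (le_trans hn₀ hn) ih
  have hafreq : ∃ᶠ n in atTop, u n ∈ ball a (δ/2) :=
    mapClusterPt_iff_frequently.1 haL _ (ball_mem_nhds a (by linarith))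
  obtain ⟨n₀, hball0, hn₀N⟩ := (hafreq.and_eventually (eventually_ge_atTop N)).exists
  have h0 : u n₀ ∈ thickening (δ/2) A := mem_thickening_iff.2 ⟨a, haA, mem_ball.1 hball0⟩
  have hbfreq : ∃ᶠ n in atTop, u n ∈ ball b (δ/2) :=
    mapClusterPt_iff_frequently.1 hbL _ (ball_mem_nhds b (by linarith))
  obtain ⟨n₁, hball1, hn₁⟩ := (hbfreq.and_eventually (eventually_ge_atTop n₀)).exists
  have hinA := hstay n₀ hn₀N h0 n₁ hn₁
  have hinB : u n₁ ∈ thickening (δ/2) B := mem_thickening_iff.2 ⟨b, hbB, mem_ball.1 hball1⟩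
  exact hTdisj2.le_bot ⟨hinA, hinB⟩

lemma subsingleton_of_preconnected_countable {s : Set Y} (hc : s.Countable)
    (hp : IsPreconnected s) : s.Subsingleton := by
  intro a ha b hb
  by_contra hne
  have himg : IsPreconnected ((fun y => dist y a) '' s) :=
    hp.image _ (continuous_id.dist continuous_const).continuousOn
  have h0 : (0:ℝ) ∈ (fun y => dist y a) '' s := ⟨a, ha, dist_self a⟩
  have hd : dist b a ∈ (fun y => dist y a) '' s := ⟨b, hb, rfl⟩
  have hIcc : Icc (0:ℝ) (dist b a) ⊆ (fun y => dist y a) '' s := himg.Icc_subset h0 hd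
  have hnull : volume (Icc (0:ℝ) (dist b a)) = 0 :=
    measure_mono_null hIcc ((hc.image _).measure_zero volume)
  rw [Real.volume_Icc] at hnull
  have hpos : (0:ℝ) < dist b a := dist_pos.2 (fun h => hne h.symm)
  rw [ENNReal.ofReal_eq_zero] at hnull
  linarith

lemma dist_tendsto_zero_of_cluster [CompactSpace Y] (u v : ℕ → Y)
    (h : ∀ p q : Y, ∀ φ : ℕ → ℕ, StrictMono φ → Tendsto (u ∘ φ) atTop (𝓝 p) →
      Tendsto (v ∘ φ) atTop (𝓝 q) → p = q) :
    Tendsto (fun n => dist (u n) (v n)) atTop (𝓝 0) := by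
  by_contra hcon
  rw [Metric.tendsto_atTop] at hcon
  push_neg at hcon
  obtain ⟨ε, hε, hfreq⟩ := hcon
  have hfreq' : ∃ᶠ n in atTop, ε ≤ dist (u n) (v n) := by
    rw [frequently_atTop]
    intro N
    obtain ⟨n, hnN, hn⟩ := hfreq N
    refine ⟨n, hnN, ?_⟩
    rw [dist_zero_right, Real.norm_eq_abs, abs_of_nonneg dist_nonneg] at hn
    exact hn
  obtain ⟨ψ, hψ, hψmem⟩ := Filter.extraction_of_frequently_atTop hfreq'
  obtain ⟨⟨p, q⟩, θ, hθ, hconv⟩ := CompactSpace.tendsto_subseq (fun k => (u (ψ k), v (ψ k)))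
  have hup : Tendsto (u ∘ (ψ ∘ θ)) atTop (𝓝 p) :=
    (continuous_fst.tendsto _).comp hconv
  have hvq : Tendsto (v ∘ (ψ ∘ θ)) atTop (𝓝 q) :=
    (continuous_snd.tendsto _).comp hconv
  have hpq : p = q := h p q (ψ ∘ θ) (hψ.comp hθ) hup hvq
  have hdist : Tendsto (fun k => dist (u (ψ (θ k))) (v (ψ (θ k)))) atTop (𝓝 (dist p q)) := by
    have : Continuous (fun yz : Y × Y => dist yz.1 yz.2) := continuous_dist
    exact (this.tendsto _).comp hconv
  have : ε ≤ dist p q := le_of_tendsto_of_tendsto' tendsto_const_nhds hdist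
    (fun k => hψmem (θ k))
  rw [hpq, dist_self] at this
  linarith

end ClusterLemmas


section Empirical

variable {X : Type*} [MetricSpace X] [CompactSpace X] [MeasurableSpace X] [BorelSpace X]

lemma empiricalPM_integral (T : X → X) (x : X) (n : ℕ) (f : X →ᵇ ℝ) :
    ∫ y, f y ∂(empiricalPM T x n : Measure X)
      = (∑ j ∈ Finset.range (n + 1), f (T^[j] x)) / ((n : ℝ) + 1) := by
  have h1 : (empiricalPM T x n : Measure X)
      = (n + 1 : ℝ≥0∞)⁻¹ • ∑ j ∈ Finset.range (n + 1), Measure.dirac (T^[j] x) := rfl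
  rw [h1, integral_smul_measure, integral_finset_sum_measure (fun i _ => f.integrable _)]
  simp only [integral_dirac]
  rw [ENNReal.toReal_inv]
  have : ((n : ℝ≥0∞) + 1).toReal = (n : ℝ) + 1 := by
    rw [ENNReal.toReal_add (by simp) (by simp)]
    simp
  rw [this, smul_eq_mul, div_eq_inv_mul]

lemma empirical_step (T : X → X) (x : X) (f : X →ᵇ ℝ) :
    Tendsto (fun n => (∫ y, f y ∂(empiricalPM T x (n+1) : Measure X))
      - ∫ y, f y ∂(empiricalPM T x n : Measure X)) atTop (𝓝 0) := by
  set S : ℕ → ℝ := fun n => ∑ j ∈ Finset.range (n + 1), f (T^[j] x) with hS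
  have hfnn : 0 ≤ ‖f‖ := norm_nonneg f
  have hSbound : ∀ n : ℕ, |S n| ≤ ((n:ℝ) + 1) * ‖f‖ := by
    intro n
    calc |S n| ≤ ∑ j ∈ Finset.range (n+1), |f (T^[j] x)| := Finset.abs_sum_le_sum_abs _ _
    _ ≤ ∑ _j ∈ Finset.range (n+1), ‖f‖ := Finset.sum_le_sum fun j _ => by
          rw [← Real.norm_eq_abs]; exact f.norm_coe_le_norm _
    _ = ((n:ℝ)+1) * ‖f‖ := by
          rw [Finset.sum_const, Finset.card_range]
          push_cast; ring
  apply squeeze_zero_norm (a := fun n : ℕ => 2 * ‖f‖ / ((n:ℝ) + 2))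
  · intro n
    rw [empiricalPM_integral, empiricalPM_integral]
    have hrec : S (n+1) = S n + f (T^[n+1] x) := Finset.sum_range_succ _ _
    have h1 : ((n:ℝ) + 1) ≠ 0 := by positivity
    have h2 : (((n:ℝ) + 1) + 1) ≠ 0 := by positivity
    have hcast : ((n + 1 : ℕ) : ℝ) + 1 = ((n:ℝ) + 1) + 1 := by push_cast; ring
    rw [hcast, Real.norm_eq_abs, div_sub_div _ _ h2 h1, abs_div,
      abs_of_pos (by positivity : (0:ℝ) < (((n:ℝ)+1)+1) * ((n:ℝ)+1)),
      div_le_div_iff₀ (by positivity) (by positivity : (0:ℝ) < (n:ℝ)+2)]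
    have hf := f.norm_coe_le_norm (T^[n+1] x)
    rw [Real.norm_eq_abs] at hf
    have hSb := hSbound n
    have key : |S (n+1) * ((n:ℝ)+1) - (((n:ℝ)+1)+1) * S n| ≤ 2 * ((n:ℝ)+1) * ‖f‖ := by
      have heq : S (n+1) * ((n:ℝ)+1) - (((n:ℝ)+1)+1) * S n
          = ((n:ℝ)+1) * f (T^[n+1] x) - S n := by rw [hrec]; ring
      rw [heq]
      calc |((n:ℝ)+1) * f (T^[n+1] x) - S n|
          ≤ |((n:ℝ)+1) * f (T^[n+1] x)| + |S n| := abs_sub _ _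
      _ = ((n:ℝ)+1) * |f (T^[n+1] x)| + |S n| := by
            rw [abs_mul, abs_of_pos (by positivity : (0:ℝ) < (n:ℝ)+1)]
      _ ≤ ((n:ℝ)+1) * ‖f‖ + ((n:ℝ)+1) * ‖f‖ := by
            have := mul_le_mul_of_nonneg_left hf (by positivity : (0:ℝ) ≤ (n:ℝ)+1)
            linarith
      _ = 2 * ((n:ℝ)+1) * ‖f‖ := by ring
    nlinarith [abs_nonneg (S (n+1) * ((n:ℝ)+1) - (((n:ℝ)+1)+1) * S n),
      (show (0:ℝ) ≤ (n:ℝ) from Nat.cast_nonneg n)]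
  · have h3 : Tendsto (fun n : ℕ => ((n:ℝ)+2)) atTop atTop :=
      tendsto_atTop_add_const_right _ _ tendsto_natCast_atTop_atTop
    have h4 := h3.inv_tendsto_atTop.const_mul (2*‖f‖)
    simpa [div_eq_mul_inv] using h4

end Empirical

/-- **Theorem 2.4 ([CE11, Theorem 1.7]).** If the set `O` of observable measures is countably
infinite, then there are countably infinitely many physical measures whose basins of
attraction cover `X` Lebesgue-almost everywhere; moreover in this case `O` is the weak*
closure of the set `Phy` of physical measures. -/
theorem countable_observable_implies_physical
    {X : Type*} [MetricSpace X] [CompactSpace X] [MeasurableSpace X] [BorelSpace X]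
    (T : X → X) (hT : IsHomeomorph T)
    (Leb : MeasureTheory.Measure X) [IsProbabilityMeasure Leb]
    (hcount : {μ : ProbabilityMeasure X | IsObservable Leb T μ}.Countable)
    (hinf : {μ : ProbabilityMeasure X | IsObservable Leb T μ}.Infinite) :
    (∃ P : Set (ProbabilityMeasure X), P.Countable ∧ P.Infinite ∧
        (∀ μ ∈ P, IsPhysical Leb T μ) ∧
        Leb (⋃ μ ∈ P, {x | limitSet T x = {μ}}) = 1) ∧
      {μ : ProbabilityMeasure X | IsObservable Leb T μ} =
        closure {μ : ProbabilityMeasure X | IsPhysical Leb T μ} := by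
  classical
  letI : MetricSpace (ProbabilityMeasure X) := metrizableSpaceMetric _
  haveI hPC : CompactSpace (ProbabilityMeasure X) := probMeasure_compactSpace
  haveI : SecondCountableTopology (ProbabilityMeasure X) := inferInstance
  set u : X → ℕ → ProbabilityMeasure X := fun x => empiricalPM T x with hu
  have hlimchar : ∀ x : X, limitSet T x = {μ | MapClusterPt μ atTop (u x)} := by
    intro x
    ext μ
    constructor
    · rintro ⟨φ, hφ, h⟩
      exact mapClusterPt_of_subseq hφ h
    · intro h
      obtain ⟨φ, hφ, h2⟩ := exists_subseq_of_mapClusterPt h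
      exact ⟨φ, hφ, h2⟩
  have hne : ∀ x : X, (limitSet T x).Nonempty := by
    intro x
    obtain ⟨μ, hμ⟩ := exists_clusterPt_of_compactSpace (map (u x) atTop)
    refine ⟨μ, ?_⟩
    rw [hlimchar x]
    exact hμ
  have hstepdist : ∀ x : X, Tendsto (fun n => dist (u x n) (u x (n+1))) atTop (𝓝 0) := by
    intro x
    apply dist_tendsto_zero_of_cluster
    intro p q φ hφ hp hq
    have hall : ∀ f : X →ᵇ ℝ, Tendsto (fun k => ∫ y, f y ∂((u x (φ k + 1)) : Measure X))
        atTop (𝓝 (∫ y, f y ∂(p : Measure X))) := by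
      intro f
      have h1 : Tendsto (fun k => ∫ y, f y ∂(u x (φ k) : Measure X)) atTop
          (𝓝 (∫ y, f y ∂(p : Measure X))) :=
        ProbabilityMeasure.tendsto_iff_forall_integral_tendsto.1 hp f
      have h2 : Tendsto (fun k => (∫ y, f y ∂(u x (φ k + 1) : Measure X))
          - ∫ y, f y ∂(u x (φ k) : Measure X)) atTop (𝓝 0) :=
        (empirical_step T x f).comp hφ.tendsto_atTop
      have h3 := h1.add h2
      rw [add_zero] at h3
      have h4 : (fun k => (∫ y, f y ∂(u x (φ k) : Measure X))
          + ((∫ y, f y ∂(u x (φ k + 1) : Measure X)) - ∫ y, f y ∂(u x (φ k) : Measure X)))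
          = fun k => ∫ y, f y ∂(u x (φ k + 1) : Measure X) := funext fun k => by ring
      rw [h4] at h3
      exact h3
    have hq' : Tendsto (fun k => u x (φ k + 1)) atTop (𝓝 p) :=
      ProbabilityMeasure.tendsto_iff_forall_integral_tendsto.2 hall
    have hq'' : Tendsto ((fun n => u x (n + 1)) ∘ φ) atTop (𝓝 p) := hq'
    exact tendsto_nhds_unique hq'' hq
  have hconn : ∀ x : X, IsPreconnected (limitSet T x) := by
    intro x
    rw [hlimchar x]
    exact clusterSet_preconnected (u x) (hstepdist x)
  set O := {μ : ProbabilityMeasure X | IsObservable Leb T μ} with hO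
  have hOclosed : IsClosed O := by
    apply isClosed_of_closure_subset
    intro μ hμ U hU hμU
    obtain ⟨ν, hνU, hνO⟩ := (_root_.mem_closure_iff.1 hμ) U hU hμU
    exact hνO U hU hνU
  have hVO : Leb {x | ¬ limitSet T x ⊆ O} = 0 := by
    obtain ⟨B, hBcnt, _, hBbasis⟩ := exists_countable_basis (ProbabilityMeasure X)
    set N := {b ∈ B | Leb {x | (limitSet T x ∩ b).Nonempty} = 0} with hN
    have hNcnt : N.Countable := hBcnt.mono (sep_subset _ _)
    have hsub : {x | ¬ limitSet T x ⊆ O} ⊆ ⋃ b ∈ N, {x | (limitSet T x ∩ b).Nonempty} := by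
      intro x hx
      rw [mem_setOf_eq, not_subset] at hx
      obtain ⟨μ, hμL, hμO⟩ := hx
      have hμO' : ¬ IsObservable Leb T μ := hμO
      unfold IsObservable at hμO'
      push_neg at hμO'
      obtain ⟨U, hUopen, hμU, hUnull⟩ := hμO'
      have hUnull' : Leb {x | (limitSet T x ∩ U).Nonempty} = 0 :=
        le_antisymm hUnull zero_le
      obtain ⟨b, hbB, hμb, hbU⟩ := hBbasis.exists_subset_of_mem_open hμU hUopen
      have hbN : b ∈ N := ⟨hbB, measure_mono_null
        (fun y hy => hy.mono (inter_subset_inter_right _ hbU)) hUnull'⟩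
      exact mem_biUnion hbN ⟨μ, hμL, hμb⟩
    exact measure_mono_null hsub ((measure_biUnion_null_iff hNcnt).2 fun b hb => hb.2)
  have hsing : ∀ x, limitSet T x ⊆ O → ∃ μ ∈ O, limitSet T x = {μ} := by
    intro x hx
    have hsub : (limitSet T x).Subsingleton :=
      subsingleton_of_preconnected_countable (hcount.mono hx) (hconn x)
    obtain ⟨μ, hμ⟩ := hne x
    exact ⟨μ, hx hμ, hsub.eq_singleton_of_mem hμ⟩
  set Phy := {μ : ProbabilityMeasure X | IsPhysical Leb T μ} with hPhy
  have hPhyO : Phy ⊆ O := by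
    intro μ hμ U hU hμU
    refine lt_of_lt_of_le hμ (measure_mono ?_)
    intro x hx
    have hx' : limitSet T x = {μ} := hx
    exact ⟨μ, by rw [hx']; exact rfl, hμU⟩
  have hnullnp : Leb (⋃ μ ∈ O \ Phy, {x | limitSet T x = {μ}}) = 0 := by
    refine (measure_biUnion_null_iff (hcount.mono diff_subset)).2 ?_
    intro μ hμ
    by_contra hpos
    exact hμ.2 (lt_of_le_of_ne zero_le (Ne.symm hpos))
  have hcover : ∀ x, limitSet T x ⊆ O →
      x ∈ (⋃ μ ∈ O ∩ Phy, {x | limitSet T x = {μ}})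
        ∪ ⋃ μ ∈ O \ Phy, {x | limitSet T x = {μ}} := by
    intro x hx
    obtain ⟨μ, hμO, hμBas⟩ := hsing x hx
    by_cases hp : μ ∈ Phy
    · exact Or.inl (mem_biUnion ⟨hμO, hp⟩ hμBas)
    · exact Or.inr (mem_biUnion ⟨hμO, hp⟩ hμBas)
  have hmain : Leb (⋃ μ ∈ O ∩ Phy, {x | limitSet T x = {μ}}) = 1 := by
    refine le_antisymm prob_le_one ?_
    have huniv : (univ : Set X) ⊆ {x | ¬ limitSet T x ⊆ O}
        ∪ ((⋃ μ ∈ O ∩ Phy, {x | limitSet T x = {μ}})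
          ∪ ⋃ μ ∈ O \ Phy, {x | limitSet T x = {μ}}) := by
      intro x _
      by_cases hx : limitSet T x ⊆ O
      · exact Or.inr (hcover x hx)
      · exact Or.inl hx
    have h2 : Leb (univ : Set X) ≤ Leb {x | ¬ limitSet T x ⊆ O}
        + Leb ((⋃ μ ∈ O ∩ Phy, {x | limitSet T x = {μ}})
          ∪ ⋃ μ ∈ O \ Phy, {x | limitSet T x = {μ}}) :=
      (measure_mono huniv).trans (measure_union_le _ _)
    have h3 : Leb ((⋃ μ ∈ O ∩ Phy, {x | limitSet T x = {μ}})
          ∪ ⋃ μ ∈ O \ Phy, {x | limitSet T x = {μ}})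
        ≤ Leb (⋃ μ ∈ O ∩ Phy, {x | limitSet T x = {μ}})
          + Leb (⋃ μ ∈ O \ Phy, {x | limitSet T x = {μ}}) := measure_union_le _ _
    rw [hVO, hnullnp, zero_add, add_zero] at *
    calc (1:ℝ≥0∞) = Leb univ := measure_univ.symm
    _ ≤ _ := h2.trans h3
  have hOPhy : O ⊆ closure Phy := by
    intro μ hμ
    by_contra hc
    have hU : IsOpen (closure Phy)ᶜ := isClosed_closure.isOpen_compl
    have hpos := hμ _ hU hc
    have hzero : Leb {x | (limitSet T x ∩ (closure Phy)ᶜ).Nonempty} = 0 := by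
      have hsub2 : {x | (limitSet T x ∩ (closure Phy)ᶜ).Nonempty}
          ⊆ {x | ¬ limitSet T x ⊆ O} ∪ ⋃ ν ∈ O \ Phy, {x | limitSet T x = {ν}} := by
        intro x hx
        by_cases hxO : limitSet T x ⊆ O
        · obtain ⟨ν, hνO, hνBas⟩ := hsing x hxO
          obtain ⟨ρ, hρL, hρc⟩ := hx
          rw [hνBas] at hρL
          rw [mem_singleton_iff] at hρL
          subst hρL
          have hνnp : ρ ∉ Phy := fun hp => hρc (subset_closure hp)
          exact Or.inr (mem_biUnion ⟨hνO, hνnp⟩ hνBas)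
        · exact Or.inl hxO
      exact measure_mono_null hsub2 (measure_union_null hVO hnullnp)
    rw [hzero] at hpos
    exact lt_irrefl 0 hpos
  have hOeq : O = closure Phy := by
    refine Subset.antisymm hOPhy ?_
    calc closure Phy ⊆ closure O := closure_mono hPhyO
    _ = O := hOclosed.closure_eq
  have hOP : O ∩ Phy = Phy := inter_eq_right.2 hPhyO
  have hPhyCnt : Phy.Countable := hcount.mono hPhyO
  have hPhyInf : Phy.Infinite := by
    by_contra hfin
    rw [Set.not_infinite] at hfin
    have hcl : closure Phy = Phy := hfin.isClosed.closure_eq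
    rw [hOeq, hcl] at hinf
    exact hinf hfin
  rw [hOP] at hmain
  exact ⟨⟨Phy, hPhyCnt, hPhyInf, fun μ hμ => hμ, hmain⟩, hOeq⟩
end

section
/- Let Φ = {log φ_n}_{n≥1} be a subadditive potential over (X,T), let (ν_n) be a sequence in M(X), and set μ_n = (1/n)·Σ_{i=0}^{n-1} (T^i)_* ν_n. Assume μ_{n_i} converges weak* to μ along some subsequence (n_i). Then μ is T-invariant and limsup_{i→∞} (1/n_i)·∫ log φ_{n_i} dν_{n_i} ≤ χ(μ,Φ). If moreover Φ is almost additive, then lim_{i→∞} (1/n_i)·∫ log φ_{n_i} dν_{n_i} = χ(μ,Φ). -/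
open MeasureTheory Filter Topology
open scoped ENNReal

private lemma sum_range_mul_eq (f : ℕ → ℝ) (Q m : ℕ) :
    ∑ k ∈ Finset.range (Q * m), f k
      = ∑ t ∈ Finset.range Q, ∑ j ∈ Finset.range m, f (t * m + j) := by
  induction Q with
  | zero => simp
  | succ Q ih =>
      have : (Q + 1) * m = Q * m + m := by ring
      rw [this, Finset.sum_range_add, ih, Finset.sum_range_succ]

section chain
variable {X : Type*} (T : X → X) (φ : ℕ → X → ℝ)

private lemma chain_upper
    (hpos : ∀ n, 1 ≤ n → ∀ x, 0 < φ n x)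
    (hsub : ∀ m n, 1 ≤ m → 1 ≤ n → ∀ x, φ (m + n) x ≤ φ m x * φ n (T^[m] x))
    (m r : ℕ) (hm : 1 ≤ m) (hr : 1 ≤ r) :
    ∀ Q (y : X), Real.log (φ (Q * m + r) y)
      ≤ (∑ t ∈ Finset.range Q, Real.log (φ m (T^[t * m] y)))
        + Real.log (φ r (T^[Q * m] y)) := by
  intro Q
  induction Q with
  | zero => intro y; simp
  | succ Q ih =>
      intro y
      have hQr : 1 ≤ Q * m + r := le_add_of_nonneg_of_le (Nat.zero_le _) hr
      have hstep : φ ((Q + 1) * m + r) y ≤ φ m y * φ (Q * m + r) (T^[m] y) := by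
        have := hsub m (Q * m + r) hm hQr y
        have he : (Q + 1) * m + r = m + (Q * m + r) := by ring
        rw [he]; exact this
      have hpos1 : 0 < φ ((Q + 1) * m + r) y := hpos _ (le_add_of_nonneg_of_le (Nat.zero_le _) hr) y
      have hposm : 0 < φ m y := hpos m hm y
      have hposQ : 0 < φ (Q * m + r) (T^[m] y) := hpos _ hQr _
      have h1 : Real.log (φ ((Q + 1) * m + r) y)
          ≤ Real.log (φ m y) + Real.log (φ (Q * m + r) (T^[m] y)) := by
        calc Real.log (φ ((Q + 1) * m + r) y) ≤ Real.log (φ m y * φ (Q * m + r) (T^[m] y)) :=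
              Real.log_le_log hpos1 hstep
          _ = _ := Real.log_mul hposm.ne' hposQ.ne'
      have h2 := ih (T^[m] y)
      have hit : ∀ s : ℕ, T^[s] (T^[m] y) = T^[s + m] y := fun s =>
        (Function.iterate_add_apply T s m y).symm
      simp only [hit] at h2
      calc Real.log (φ ((Q + 1) * m + r) y)
          ≤ Real.log (φ m y) + ((∑ t ∈ Finset.range Q, Real.log (φ m (T^[t * m + m] y)))
              + Real.log (φ r (T^[Q * m + m] y))) := by
            exact h1.trans (by linarith)
        _ = (∑ t ∈ Finset.range (Q + 1), Real.log (φ m (T^[t * m] y)))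
              + Real.log (φ r (T^[(Q + 1) * m] y)) := by
            rw [Finset.sum_range_succ' (fun t => Real.log (φ m (T^[t * m] y))) Q]
            have e1 : ∀ t : ℕ, (t + 1) * m = t * m + m := fun t => by ring
            simp only [e1, Nat.zero_mul, Function.iterate_zero_apply]
            ring

private lemma chain_lower (hpos : ∀ n, 1 ≤ n → ∀ x, 0 < φ n x) {C : ℝ} (hC : 1 ≤ C)
    (halm : ∀ m k, 1 ≤ m → 1 ≤ k → ∀ x,
      C⁻¹ * (φ m x * φ k (T^[m] x)) ≤ φ (m + k) x)
    (m r : ℕ) (hm : 1 ≤ m) (hr : 1 ≤ r) :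
    ∀ Q (y : X), (∑ t ∈ Finset.range Q, Real.log (φ m (T^[t * m] y)))
        + Real.log (φ r (T^[Q * m] y)) - Q * Real.log C
      ≤ Real.log (φ (Q * m + r) y) := by
  intro Q
  induction Q with
  | zero => intro y; simp
  | succ Q ih =>
      intro y
      have hC0 : (0:ℝ) < C := lt_of_lt_of_le one_pos hC
      have hQr : 1 ≤ Q * m + r := le_add_of_nonneg_of_le (Nat.zero_le _) hr
      have hposm : 0 < φ m y := hpos m hm y
      have hposQ : 0 < φ (Q * m + r) (T^[m] y) := hpos _ hQr _
      have hpos1 : 0 < φ ((Q + 1) * m + r) y := hpos _ (le_add_of_nonneg_of_le (Nat.zero_le _) hr) y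
      have hstep : C⁻¹ * (φ m y * φ (Q * m + r) (T^[m] y)) ≤ φ ((Q + 1) * m + r) y := by
        have := halm m (Q * m + r) hm hQr y
        have he : (Q + 1) * m + r = m + (Q * m + r) := by ring
        rw [he]; exact this
      have h1 : Real.log (φ m y) + Real.log (φ (Q * m + r) (T^[m] y)) - Real.log C
          ≤ Real.log (φ ((Q + 1) * m + r) y) := by
        have hlhs : 0 < C⁻¹ * (φ m y * φ (Q * m + r) (T^[m] y)) := by positivity
        have := Real.log_le_log hlhs hstep
        rw [Real.log_mul (by positivity) (by positivity),
          Real.log_mul hposm.ne' hposQ.ne', Real.log_inv] at this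
        linarith
      have h2 := ih (T^[m] y)
      have hit : ∀ s : ℕ, T^[s] (T^[m] y) = T^[s + m] y := fun s =>
        (Function.iterate_add_apply T s m y).symm
      simp only [hit] at h2
      have h3 : (∑ t ∈ Finset.range (Q + 1), Real.log (φ m (T^[t * m] y)))
            + Real.log (φ r (T^[(Q + 1) * m] y)) - (Q + 1 : ℕ) * Real.log C
          = Real.log (φ m y) + ((∑ t ∈ Finset.range Q, Real.log (φ m (T^[t * m + m] y)))
              + Real.log (φ r (T^[Q * m + m] y)) - Q * Real.log C) - Real.log C := by
        rw [Finset.sum_range_succ' (fun t => Real.log (φ m (T^[t * m] y))) Q]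
        have e1 : ∀ t : ℕ, (t + 1) * m = t * m + m := fun t => by ring
        simp only [e1, Nat.zero_mul, Function.iterate_zero_apply]
        push_cast
        ring
      rw [h3]
      have := add_le_add_left h2 (Real.log (φ m y))
      linarith

private lemma main_upper
    (hpos : ∀ n, 1 ≤ n → ∀ x, 0 < φ n x)
    (hsub : ∀ m n, 1 ≤ m → 1 ≤ n → ∀ x, φ (m + n) x ≤ φ m x * φ n (T^[m] x))
    (m : ℕ) (hm : 1 ≤ m) {M : ℝ}
    (hM : ∀ s, 1 ≤ s → s ≤ 3 * m → ∀ x, |Real.log (φ s x)| ≤ M)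
    (N : ℕ) (hN : 2 * m ≤ N) (x : X) :
    (m : ℝ) * Real.log (φ N x)
      ≤ (∑ k ∈ Finset.range N, Real.log (φ m (T^[k] x))) + 5 * m * M := by
  have hm0 : 0 < m := hm
  set d := N / m with hd
  set e := N % m with he
  have hde : m * d + e = N := Nat.div_add_mod N m
  have hem : e < m := Nat.mod_lt _ hm0
  have hd2 : 2 ≤ d := by
    rw [hd, Nat.le_div_iff_mul_le hm0]; omega
  set Q := d - 2 with hQ
  have hc1 : Q * m = d * m - 2 * m := Nat.sub_mul d 2 m
  have hc2 : 2 * m ≤ d * m := Nat.mul_le_mul_right m hd2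
  have hc3 : m * d = d * m := Nat.mul_comm m d
  have hQmN : Q * m + 2 * m + e = N := by omega
  have hM0 : 0 ≤ M := le_trans (abs_nonneg _) (hM m hm (by omega) x)
  have key : ∀ j ∈ Finset.range m, Real.log (φ N x)
      ≤ (∑ t ∈ Finset.range Q, Real.log (φ m (T^[t * m + j] x))) + 2 * M := by
    intro j hj
    rw [Finset.mem_range] at hj
    set r := N - j - Q * m with hr
    have hr1 : 1 ≤ r := by omega
    have hr3 : r ≤ 3 * m := by omega
    have htail : ∀ y : X, Real.log (φ r y) ≤ M := fun y =>
      le_trans (le_abs_self _) (hM r hr1 hr3 y)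
    rcases Nat.eq_zero_or_pos j with hj0 | hj1
    · subst hj0
      have hNr : N = Q * m + r := by omega
      have h3 := chain_upper T φ hpos hsub m r hm hr1 Q x
      rw [← hNr] at h3
      have h4 := htail (T^[Q * m] x)
      simp only [Nat.add_zero]
      linarith
    · have hNj : N = j + (Q * m + r) := by omega
      have h1 : φ N x ≤ φ j x * φ (Q * m + r) (T^[j] x) := by
        rw [hNj]; exact hsub j (Q * m + r) hj1 (by omega) x
      have hposN : 0 < φ N x := hpos N (by omega) x
      have hposj : 0 < φ j x := hpos j hj1 x
      have hposQ : 0 < φ (Q * m + r) (T^[j] x) := hpos _ (by omega) _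
      have h2 : Real.log (φ N x) ≤ Real.log (φ j x) + Real.log (φ (Q * m + r) (T^[j] x)) := by
        calc Real.log (φ N x) ≤ Real.log (φ j x * φ (Q * m + r) (T^[j] x)) :=
            Real.log_le_log hposN h1
          _ = _ := Real.log_mul hposj.ne' hposQ.ne'
      have h3 := chain_upper T φ hpos hsub m r hm hr1 Q (T^[j] x)
      have hit : ∀ s : ℕ, T^[s] (T^[j] x) = T^[s + j] x := fun s =>
        (Function.iterate_add_apply T s j x).symm
      simp only [hit] at h3
      have hhead : Real.log (φ j x) ≤ M := le_trans (le_abs_self _) (hM j hj1 (by omega) x)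
      have htail' : Real.log (φ r (T^[Q * m + j] x)) ≤ M := htail _
      linarith
  have h0 : ∑ _j ∈ Finset.range m, Real.log (φ N x) = (m : ℝ) * Real.log (φ N x) := by
    simp [Finset.sum_const, nsmul_eq_mul]
  have hsum : (m : ℝ) * Real.log (φ N x)
      ≤ (∑ j ∈ Finset.range m, ∑ t ∈ Finset.range Q, Real.log (φ m (T^[t * m + j] x)))
        + (m : ℝ) * (2 * M) := by
    rw [← h0]
    refine le_trans (Finset.sum_le_sum key) ?_
    rw [Finset.sum_add_distrib]
    simp [Finset.sum_const, nsmul_eq_mul]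
  have hswap : (∑ j ∈ Finset.range m, ∑ t ∈ Finset.range Q, Real.log (φ m (T^[t * m + j] x)))
      = ∑ k ∈ Finset.range (Q * m), Real.log (φ m (T^[k] x)) := by
    rw [Finset.sum_comm, sum_range_mul_eq (fun k => Real.log (φ m (T^[k] x))) Q m]
  set s := N - Q * m with hs
  have hs3 : s ≤ 3 * m := by omega
  have hNs : N = Q * m + s := by omega
  have hcomp : (∑ k ∈ Finset.range (Q * m), Real.log (φ m (T^[k] x)))
      ≤ (∑ k ∈ Finset.range N, Real.log (φ m (T^[k] x))) + 3 * m * M := by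
    have hsplit : (∑ k ∈ Finset.range N, Real.log (φ m (T^[k] x)))
        = (∑ k ∈ Finset.range (Q * m), Real.log (φ m (T^[k] x)))
          + ∑ k ∈ Finset.range s, Real.log (φ m (T^[Q * m + k] x)) := by
      conv_lhs => rw [hNs]
      exact Finset.sum_range_add _ _ _
    have hlow : -(3 * (m : ℝ) * M) ≤ ∑ k ∈ Finset.range s, Real.log (φ m (T^[Q * m + k] x)) := by
      have hterm : ∀ k ∈ Finset.range s, -M ≤ Real.log (φ m (T^[Q * m + k] x)) := fun k _ =>
        neg_le_of_abs_le (hM m hm (by omega) _)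
      calc -(3 * (m : ℝ) * M) ≤ (s : ℝ) * (-M) := by
            have hcs : (s : ℝ) ≤ 3 * m := by exact_mod_cast hs3
            nlinarith
        _ = ∑ _k ∈ Finset.range s, (-M) := by simp [Finset.sum_const, nsmul_eq_mul, mul_comm]
        _ ≤ _ := Finset.sum_le_sum hterm
    linarith
  rw [hswap] at hsum
  linarith

private lemma main_lower
    (hpos : ∀ n, 1 ≤ n → ∀ x, 0 < φ n x) {C : ℝ} (hC : 1 ≤ C)
    (halm : ∀ m k, 1 ≤ m → 1 ≤ k → ∀ x,
      C⁻¹ * (φ m x * φ k (T^[m] x)) ≤ φ (m + k) x)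
    (m : ℕ) (hm : 1 ≤ m) {M : ℝ}
    (hM : ∀ s, 1 ≤ s → s ≤ 3 * m → ∀ x, |Real.log (φ s x)| ≤ M)
    (N : ℕ) (hN : 2 * m ≤ N) (x : X) :
    (∑ k ∈ Finset.range N, Real.log (φ m (T^[k] x))) - 5 * m * M
        - ((N : ℝ) + m) * Real.log C
      ≤ (m : ℝ) * Real.log (φ N x) := by
  have hm0 : 0 < m := hm
  have hC0 : (0:ℝ) < C := lt_of_lt_of_le one_pos hC
  have hlogC : 0 ≤ Real.log C := Real.log_nonneg hC
  set d := N / m with hd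
  set e := N % m with he
  have hde : m * d + e = N := Nat.div_add_mod N m
  have hem : e < m := Nat.mod_lt _ hm0
  have hd2 : 2 ≤ d := by rw [hd, Nat.le_div_iff_mul_le hm0]; omega
  set Q := d - 2 with hQ
  have hc1 : Q * m = d * m - 2 * m := Nat.sub_mul d 2 m
  have hc2 : 2 * m ≤ d * m := Nat.mul_le_mul_right m hd2
  have hc3 : m * d = d * m := Nat.mul_comm m d
  have hQmN : Q * m + 2 * m + e = N := by omega
  have hM0 : 0 ≤ M := le_trans (abs_nonneg _) (hM m hm (by omega) x)
  have key : ∀ j ∈ Finset.range m,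
      (∑ t ∈ Finset.range Q, Real.log (φ m (T^[t * m + j] x))) - 2 * M
          - ((Q : ℝ) + 1) * Real.log C
        ≤ Real.log (φ N x) := by
    intro j hj
    rw [Finset.mem_range] at hj
    set r := N - j - Q * m with hr
    have hr1 : 1 ≤ r := by omega
    have hr3 : r ≤ 3 * m := by omega
    have htail : ∀ y : X, -M ≤ Real.log (φ r y) := fun y =>
      neg_le_of_abs_le (hM r hr1 hr3 y)
    rcases Nat.eq_zero_or_pos j with hj0 | hj1
    · subst hj0
      have hNr : N = Q * m + r := by omega
      have h3 := chain_lower T φ hpos hC halm m r hm hr1 Q x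
      rw [← hNr] at h3
      have h4 := htail (T^[Q * m] x)
      simp only [Nat.add_zero]
      linarith
    · have hNj : N = j + (Q * m + r) := by omega
      have h1 : C⁻¹ * (φ j x * φ (Q * m + r) (T^[j] x)) ≤ φ N x := by
        rw [hNj]; exact halm j (Q * m + r) hj1 (by omega) x
      have hposN : 0 < φ N x := hpos N (by omega) x
      have hposj : 0 < φ j x := hpos j hj1 x
      have hposQ : 0 < φ (Q * m + r) (T^[j] x) := hpos _ (by omega) _
      have h2 : Real.log (φ j x) + Real.log (φ (Q * m + r) (T^[j] x)) - Real.log C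
          ≤ Real.log (φ N x) := by
        have hl : 0 < C⁻¹ * (φ j x * φ (Q * m + r) (T^[j] x)) := by positivity
        have := Real.log_le_log hl h1
        rw [Real.log_mul (by positivity) (by positivity),
          Real.log_mul hposj.ne' hposQ.ne', Real.log_inv] at this
        linarith
      have h3 := chain_lower T φ hpos hC halm m r hm hr1 Q (T^[j] x)
      have hit : ∀ s : ℕ, T^[s] (T^[j] x) = T^[s + j] x := fun s =>
        (Function.iterate_add_apply T s j x).symm
      simp only [hit] at h3
      have hhead : -M ≤ Real.log (φ j x) := neg_le_of_abs_le (hM j hj1 (by omega) x)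
      have htail' : -M ≤ Real.log (φ r (T^[Q * m + j] x)) := htail _
      linarith
  have h0 : ∑ _j ∈ Finset.range m, Real.log (φ N x) = (m : ℝ) * Real.log (φ N x) := by
    simp [Finset.sum_const, nsmul_eq_mul]
  have hsum : (∑ j ∈ Finset.range m, ∑ t ∈ Finset.range Q, Real.log (φ m (T^[t * m + j] x)))
        - (m : ℝ) * (2 * M) - (m : ℝ) * (((Q : ℝ) + 1) * Real.log C)
      ≤ (m : ℝ) * Real.log (φ N x) := by
    rw [← h0]
    have := Finset.sum_le_sum key
    rw [Finset.sum_sub_distrib, Finset.sum_sub_distrib] at this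
    simp only [Finset.sum_const, Finset.card_range, nsmul_eq_mul] at this
    linarith
  have hswap : (∑ j ∈ Finset.range m, ∑ t ∈ Finset.range Q, Real.log (φ m (T^[t * m + j] x)))
      = ∑ k ∈ Finset.range (Q * m), Real.log (φ m (T^[k] x)) := by
    rw [Finset.sum_comm, sum_range_mul_eq (fun k => Real.log (φ m (T^[k] x))) Q m]
  set s := N - Q * m with hs
  have hs3 : s ≤ 3 * m := by omega
  have hNs : N = Q * m + s := by omega
  have hcomp : (∑ k ∈ Finset.range N, Real.log (φ m (T^[k] x))) - 3 * m * M
      ≤ ∑ k ∈ Finset.range (Q * m), Real.log (φ m (T^[k] x)) := by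
    have hsplit : (∑ k ∈ Finset.range N, Real.log (φ m (T^[k] x)))
        = (∑ k ∈ Finset.range (Q * m), Real.log (φ m (T^[k] x)))
          + ∑ k ∈ Finset.range s, Real.log (φ m (T^[Q * m + k] x)) := by
      conv_lhs => rw [hNs]
      exact Finset.sum_range_add _ _ _
    have hup : (∑ k ∈ Finset.range s, Real.log (φ m (T^[Q * m + k] x))) ≤ 3 * (m : ℝ) * M := by
      have hterm : ∀ k ∈ Finset.range s, Real.log (φ m (T^[Q * m + k] x)) ≤ M := fun k _ =>
        le_trans (le_abs_self _) (hM m hm (by omega) _)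
      calc (∑ k ∈ Finset.range s, Real.log (φ m (T^[Q * m + k] x)))
          ≤ ∑ _k ∈ Finset.range s, M := Finset.sum_le_sum hterm
        _ = (s : ℝ) * M := by simp [Finset.sum_const, nsmul_eq_mul]
        _ ≤ 3 * (m : ℝ) * M := by
            have hcs : (s : ℝ) ≤ 3 * m := by exact_mod_cast hs3
            nlinarith
    linarith
  rw [hswap] at hsum
  have hmQ : (m : ℝ) * ((Q : ℝ) + 1) ≤ (N : ℝ) + m := by
    have hle : Q * m ≤ N := by omega
    have h' : (Q : ℝ) * m ≤ N := by exact_mod_cast hle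
    have hmpos : (0:ℝ) < m := by exact_mod_cast hm0
    nlinarith
  have : (m : ℝ) * (((Q : ℝ) + 1) * Real.log C) ≤ ((N : ℝ) + m) * Real.log C := by
    rw [← mul_assoc]
    exact mul_le_mul_of_nonneg_right hmQ hlogC
  linarith

end chain

section inv
variable {X : Type*} [MetricSpace X] [CompactSpace X] [MeasurableSpace X] [BorelSpace X]

private lemma integrable_cont {f : X → ℝ} (hf : Continuous f) (ρ : Measure X)
    [IsFiniteMeasure ρ] : Integrable f ρ :=
  hf.integrable_of_hasCompactSupport
    (IsCompact.of_isClosed_subset isCompact_univ (isClosed_tsupport f) (Set.subset_univ _))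

private lemma invariance_part
    (T : X → X) (hT : Continuous T)
    (ν : ℕ → ProbabilityMeasure X) (μ : ProbabilityMeasure X)
    (n : ℕ → ℕ) (hmono : StrictMono n)
    (hconv : ∀ g : C(X, ℝ),
      Tendsto (fun i => (n i : ℝ)⁻¹ *
          ∑ k ∈ Finset.range (n i), ∫ x, g (T^[k] x) ∂(ν (n i) : Measure X)) atTop
        (𝓝 (∫ x, g x ∂(μ : Measure X)))) :
    (μ : Measure X).map T = (μ : Measure X) := by
  have hTm : Measurable T := hT.measurable
  have hint : ∀ g : C(X, ℝ), ∫ x, g (T x) ∂(μ : Measure X) = ∫ x, g x ∂(μ : Measure X) := by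
    intro g
    obtain ⟨K, hK⟩ := IsCompact.exists_bound_of_continuousOn isCompact_univ
      (g.continuous.continuousOn (s := Set.univ))
    set h : C(X, ℝ) := g.comp ⟨T, hT⟩ with hh
    have h1 := hconv g
    have h2 := hconv h
    have he : ∀ i, (n i : ℝ)⁻¹ *
        ∑ k ∈ Finset.range (n i), ∫ x, h (T^[k] x) ∂(ν (n i) : Measure X)
        = ((n i : ℝ)⁻¹ *
            ∑ k ∈ Finset.range (n i), ∫ x, g (T^[k] x) ∂(ν (n i) : Measure X))
          + (n i : ℝ)⁻¹ * ((∫ x, g (T^[n i] x) ∂(ν (n i) : Measure X))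
              - ∫ x, g x ∂(ν (n i) : Measure X)) := by
      intro i
      have hterm : ∀ k, ∫ x, h (T^[k] x) ∂(ν (n i) : Measure X)
          = ∫ x, g (T^[k+1] x) ∂(ν (n i) : Measure X) := by
        intro k
        congr 1
        ext x
        simp [hh, Function.iterate_succ_apply']
      have htel : ∑ k ∈ Finset.range (n i), (∫ x, g (T^[k+1] x) ∂(ν (n i) : Measure X)
            - ∫ x, g (T^[k] x) ∂(ν (n i) : Measure X))
          = (∫ x, g (T^[n i] x) ∂(ν (n i) : Measure X)) - ∫ x, g x ∂(ν (n i) : Measure X) := by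
        rw [Finset.sum_range_sub (fun k => ∫ x, g (T^[k] x) ∂(ν (n i) : Measure X))]
        simp
      simp only [hterm]
      rw [Finset.sum_sub_distrib] at htel
      have : ∑ k ∈ Finset.range (n i), ∫ x, g (T^[k+1] x) ∂(ν (n i) : Measure X)
          = (∑ k ∈ Finset.range (n i), ∫ x, g (T^[k] x) ∂(ν (n i) : Measure X))
            + ((∫ x, g (T^[n i] x) ∂(ν (n i) : Measure X))
              - ∫ x, g x ∂(ν (n i) : Measure X)) := by linarith
      rw [this, mul_add]
    have hw0 : Tendsto (fun i => (n i : ℝ)⁻¹ * ((∫ x, g (T^[n i] x) ∂(ν (n i) : Measure X))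
        - ∫ x, g x ∂(ν (n i) : Measure X))) atTop (𝓝 0) := by
      have hb : ∀ i, |(n i : ℝ)⁻¹ * ((∫ x, g (T^[n i] x) ∂(ν (n i) : Measure X))
          - ∫ x, g x ∂(ν (n i) : Measure X))| ≤ (n i : ℝ)⁻¹ * (2 * K) := by
        intro i
        rw [abs_mul]
        have h1' : |(∫ x, g (T^[n i] x) ∂(ν (n i) : Measure X))| ≤ K := by
          have := norm_integral_le_of_norm_le_const (μ := (ν (n i) : Measure X))
            (f := fun x => g (T^[n i] x)) (C := K)
            (Filter.Eventually.of_forall (fun x => hK _ trivial))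
          simpa using this
        have h2' : |(∫ x, g x ∂(ν (n i) : Measure X))| ≤ K := by
          have := norm_integral_le_of_norm_le_const (μ := (ν (n i) : Measure X))
            (f := fun x => g x) (C := K)
            (Filter.Eventually.of_forall (fun x => hK _ trivial))
          simpa using this
        have : |(∫ x, g (T^[n i] x) ∂(ν (n i) : Measure X))
            - ∫ x, g x ∂(ν (n i) : Measure X)| ≤ 2 * K := by
          calc |_ - _| ≤ _ + _ := abs_sub _ _
            _ ≤ 2 * K := by linarith
        have hnn : |(n i : ℝ)⁻¹| = (n i : ℝ)⁻¹ := abs_of_nonneg (by positivity)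
        rw [hnn]
        exact mul_le_mul_of_nonneg_left this (by positivity)
      have hto : Tendsto (fun i => (n i : ℝ)⁻¹ * (2 * K)) atTop (𝓝 0) := by
        have h1' : Tendsto (fun i => ((n i : ℝ))⁻¹) atTop (𝓝 0) := by
          have := (tendsto_inv_atTop_nhds_zero_nat (𝕜 := ℝ)).comp hmono.tendsto_atTop
          exact this
        simpa using h1'.mul_const (2 * K)
      exact squeeze_zero_norm (fun i => by simp only [Real.norm_eq_abs]; exact hb i) hto
    have h2' : Tendsto (fun i => (n i : ℝ)⁻¹ *
        ∑ k ∈ Finset.range (n i), ∫ x, h (T^[k] x) ∂(ν (n i) : Measure X)) atTop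
        (𝓝 (∫ x, g x ∂(μ : Measure X) + 0)) := by
      simp only [he]
      exact h1.add hw0
    rw [add_zero] at h2'
    have := tendsto_nhds_unique h2 h2'
    simpa [hh] using this
  haveI : IsProbabilityMeasure ((μ : Measure X).map T) :=
    Measure.isProbabilityMeasure_map hTm.aemeasurable
  apply ext_of_forall_lintegral_eq_of_IsFiniteMeasure
  intro f
  have hfc : Continuous fun x => ((f x : ℝ)) := NNReal.continuous_coe.comp f.continuous
  have hint1 : Integrable (fun x => ((f x : ℝ))) ((μ : Measure X).map T) :=
    integrable_cont hfc _
  have hint2 : Integrable (fun x => ((f x : ℝ))) (μ : Measure X) := integrable_cont hfc _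
  rw [lintegral_coe_eq_integral f hint1, lintegral_coe_eq_integral f hint2]
  congr 1
  rw [integral_map hTm.aemeasurable hfc.aestronglyMeasurable]
  exact hint ⟨fun x => (f x : ℝ), hfc⟩
end inv

/-- **Theorem 3.2 ([FH10, Lemmas A2 and A4]).** Let `Φ = {log φ_n}` be a subadditive potential
over `(X,T)`, `(ν_n)` a sequence of Borel probability measures, and
`μ_n = (1/n) ∑_{i<n} (T^i)_* ν_n`. If `μ_{n_i} → μ` weak* along a subsequence (i.e. the
integrals of every continuous test function converge), then `μ` is `T`-invariant and
`limsup_i (1/n_i) ∫ log φ_{n_i} dν_{n_i} ≤ χ(μ, Φ)`; if moreover `Φ` is almost additive then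
`lim_i (1/n_i) ∫ log φ_{n_i} dν_{n_i} = χ(μ, Φ)`. -/
theorem pushforward_average_limit_le_lyapExp
    {X : Type*} [MetricSpace X] [CompactSpace X] [MeasurableSpace X] [BorelSpace X]
    (T : X → X) (hT : Continuous T)
    (φ : ℕ → X → ℝ)
    (hcont : ∀ n, 1 ≤ n → Continuous (φ n))
    (hpos : ∀ n, 1 ≤ n → ∀ x, 0 < φ n x)
    (hsub : ∀ m n, 1 ≤ m → 1 ≤ n → ∀ x, φ (m + n) x ≤ φ m x * φ n (T^[m] x))
    (ν : ℕ → ProbabilityMeasure X) (μ : ProbabilityMeasure X)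
    (n : ℕ → ℕ) (hmono : StrictMono n) (hone : ∀ i, 1 ≤ n i)
    (hconv : ∀ g : C(X, ℝ),
      Tendsto (fun i => (n i : ℝ)⁻¹ *
          ∑ k ∈ Finset.range (n i), ∫ x, g (T^[k] x) ∂(ν (n i) : Measure X)) atTop
        (𝓝 (∫ x, g x ∂(μ : Measure X)))) :
    (μ : Measure X).map T = (μ : Measure X) ∧
      limsup (fun i => (((n i : ℝ)⁻¹ *
          ∫ x, Real.log (φ (n i) x) ∂(ν (n i) : Measure X) : ℝ) : EReal)) atTop
        ≤ lyapExp φ (μ : Measure X) ∧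
      ((∃ C : ℝ, 0 < C ∧ ∀ m k, 1 ≤ m → 1 ≤ k → ∀ x,
          C⁻¹ * (φ m x * φ k (T^[m] x)) ≤ φ (m + k) x ∧
            φ (m + k) x ≤ C * (φ m x * φ k (T^[m] x))) →
        Tendsto (fun i => (((n i : ℝ)⁻¹ *
            ∫ x, Real.log (φ (n i) x) ∂(ν (n i) : Measure X) : ℝ) : EReal)) atTop
          (𝓝 (lyapExp φ (μ : Measure X)))) := by
  -- continuity of log φ s
  have hlogc : ∀ s, 1 ≤ s → Continuous fun x => Real.log (φ s x) := fun s hs =>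
    (hcont s hs).log (fun x => (hpos s hs x).ne')
  -- uniform bounds
  have hBex : ∀ s : ℕ, ∃ B : ℝ, 1 ≤ s → ∀ x, |Real.log (φ s x)| ≤ B := by
    intro s
    rcases Nat.eq_zero_or_pos s with h | h
    · exact ⟨0, fun hs => absurd hs (by omega)⟩
    · obtain ⟨B, hB⟩ := IsCompact.exists_bound_of_continuousOn isCompact_univ
        ((hlogc s h).continuousOn (s := Set.univ))
      exact ⟨B, fun _ x => by simpa [Real.norm_eq_abs] using hB x trivial⟩
  choose B hB using hBex
  have hMex : ∀ m : ℕ, 1 ≤ m → ∃ M : ℝ,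
      ∀ s, 1 ≤ s → s ≤ 3 * m → ∀ x, |Real.log (φ s x)| ≤ M := by
    intro m _
    refine ⟨∑ t ∈ Finset.Icc 1 (3 * m), max (B t) 0, fun s hs1 hs3 x => ?_⟩
    calc |Real.log (φ s x)| ≤ B s := hB s hs1 x
      _ ≤ max (B s) 0 := le_max_left _ _
      _ ≤ _ := Finset.single_le_sum (f := fun t => max (B t) 0)
          (fun t _ => le_max_right _ _) (Finset.mem_Icc.mpr ⟨hs1, hs3⟩)
  -- notation
  set I : ℕ → ℝ := fun i => ∫ x, Real.log (φ (n i) x) ∂(ν (n i) : Measure X) with hI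
  set u : ℕ → EReal := fun i => (((n i : ℝ)⁻¹ * I i : ℝ) : EReal) with hu
  set a : ℕ → ℝ := fun m => ∫ x, Real.log (φ m x) ∂(μ : Measure X) with ha
  set c : ℕ → EReal := fun m => (((m : ℝ)⁻¹ * a m : ℝ) : EReal) with hc
  have hlyap : lyapExp φ (μ : Measure X) = liminf c atTop := rfl
  -- averages converge
  have hA : ∀ m, 1 ≤ m → Tendsto (fun i => (n i : ℝ)⁻¹ *
      ∑ k ∈ Finset.range (n i), ∫ x, Real.log (φ m (T^[k] x)) ∂(ν (n i) : Measure X)) atTop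
      (𝓝 (a m)) := by
    intro m hm
    have := hconv ⟨fun x => Real.log (φ m x), hlogc m hm⟩
    simpa [ContinuousMap.coe_mk, ha] using this
  have hnlarge : ∀ m : ℕ, ∀ᶠ i in atTop, 2 * m ≤ n i := by
    intro m
    filter_upwards [eventually_ge_atTop (2 * m)] with i hi
    exact le_trans hi hmono.le_apply
  have hnpos : ∀ i, (0:ℝ) < (n i : ℝ) := fun i => by exact_mod_cast hone i
  -- integrability of relevant functions
  have hint_log : ∀ s, 1 ≤ s → ∀ (ρ : Measure X), IsFiniteMeasure ρ →
      Integrable (fun x => Real.log (φ s x)) ρ := fun s hs ρ hρ =>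
    @integrable_cont X _ _ _ _ _ (hlogc s hs) ρ hρ
  have hint_sum : ∀ m, 1 ≤ m → ∀ N : ℕ, ∀ (ρ : Measure X), IsFiniteMeasure ρ →
      Integrable (fun x => ∑ k ∈ Finset.range N, Real.log (φ m (T^[k] x))) ρ := by
    intro m hm N ρ hρ
    have : Continuous fun x => ∑ k ∈ Finset.range N, Real.log (φ m (T^[k] x)) :=
      continuous_finset_sum _ (fun k _ => (hlogc m hm).comp (hT.iterate k))
    exact @integrable_cont X _ _ _ _ _ this ρ hρ
  -- The key integrated upper bound
  have hupper : ∀ m, 1 ≤ m → limsup u atTop ≤ c m := by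
    intro m hm
    obtain ⟨M, hM⟩ := hMex m hm
    have hm' : (0:ℝ) < (m : ℝ) := by exact_mod_cast hm
    -- eventual real inequality
    have hev : ∀ᶠ i in atTop, (n i : ℝ)⁻¹ * I i
        ≤ (m : ℝ)⁻¹ * ((n i : ℝ)⁻¹ *
            ∑ k ∈ Finset.range (n i), ∫ x, Real.log (φ m (T^[k] x)) ∂(ν (n i) : Measure X))
          + 5 * M * (n i : ℝ)⁻¹ := by
      filter_upwards [hnlarge m] with i hi
      set ρ : Measure X := (ν (n i) : Measure X)
      haveI : IsProbabilityMeasure ρ := (ν (n i)).prop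
      have hpt : ∀ x, (m : ℝ) * Real.log (φ (n i) x)
          ≤ (∑ k ∈ Finset.range (n i), Real.log (φ m (T^[k] x))) + 5 * m * M :=
        main_upper T φ hpos hsub m hm hM (n i) hi
      have hintL : Integrable (fun x => (m : ℝ) * Real.log (φ (n i) x)) ρ :=
        (hint_log (n i) (hone i) ρ inferInstance).const_mul _
      have hintR : Integrable (fun x =>
          (∑ k ∈ Finset.range (n i), Real.log (φ m (T^[k] x))) + 5 * m * M) ρ :=
        (hint_sum m hm (n i) ρ inferInstance).add (integrable_const _)
      have hII := integral_mono hintL hintR (fun x => hpt x)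
      rw [integral_const_mul] at hII
      have hfs : ∫ x, (∑ k ∈ Finset.range (n i), Real.log (φ m (T^[k] x))) ∂ρ
          = ∑ k ∈ Finset.range (n i), ∫ x, Real.log (φ m (T^[k] x)) ∂ρ :=
        integral_finset_sum _ (fun k _ =>
          @integrable_cont X _ _ _ _ _ ((hlogc m hm).comp (hT.iterate k)) ρ inferInstance)
      rw [integral_add (hint_sum m hm (n i) ρ inferInstance) (integrable_const _),
        hfs, integral_const] at hII
      simp only [measure_univ, ENNReal.toReal_one, probReal_univ, smul_eq_mul, one_mul] at hII
      -- hII : m * I i ≤ ∑ k, ∫ ... + 5 * m * M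
      set S : ℝ := ∑ k ∈ Finset.range (n i), ∫ x, Real.log (φ m (T^[k] x)) ∂ρ
      have hN' := hnpos i
      have e1 : (m : ℝ)⁻¹ * (n i : ℝ)⁻¹ * ((m : ℝ) * I i) = (n i : ℝ)⁻¹ * I i := by
        field_simp
      have e2 : (m : ℝ)⁻¹ * (n i : ℝ)⁻¹ * (S + 5 * m * M)
          = (m : ℝ)⁻¹ * ((n i : ℝ)⁻¹ * S) + 5 * M * (n i : ℝ)⁻¹ := by
        field_simp
      have h3 := mul_le_mul_of_nonneg_left hII
        (by positivity : (0:ℝ) ≤ (m : ℝ)⁻¹ * (n i : ℝ)⁻¹)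
      rw [e1, e2] at h3
      exact h3
    -- limit of the RHS
    have hR : Tendsto (fun i => (m : ℝ)⁻¹ * ((n i : ℝ)⁻¹ *
          ∑ k ∈ Finset.range (n i), ∫ x, Real.log (φ m (T^[k] x)) ∂(ν (n i) : Measure X))
        + 5 * M * (n i : ℝ)⁻¹) atTop (𝓝 ((m : ℝ)⁻¹ * a m + 5 * M * 0)) := by
      refine Tendsto.add (Tendsto.const_mul _ (hA m hm)) (Tendsto.const_mul _ ?_)
      exact (tendsto_inv_atTop_nhds_zero_nat (𝕜 := ℝ)).comp hmono.tendsto_atTop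
    rw [mul_zero, add_zero] at hR
    have hRe : Tendsto (fun i => (((m : ℝ)⁻¹ * ((n i : ℝ)⁻¹ *
          ∑ k ∈ Finset.range (n i), ∫ x, Real.log (φ m (T^[k] x)) ∂(ν (n i) : Measure X))
        + 5 * M * (n i : ℝ)⁻¹ : ℝ) : EReal)) atTop (𝓝 (((m : ℝ)⁻¹ * a m : ℝ) : EReal)) :=
      EReal.tendsto_coe.mpr hR
    calc limsup u atTop ≤ limsup (fun i => (((m : ℝ)⁻¹ * ((n i : ℝ)⁻¹ *
          ∑ k ∈ Finset.range (n i), ∫ x, Real.log (φ m (T^[k] x)) ∂(ν (n i) : Measure X))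
        + 5 * M * (n i : ℝ)⁻¹ : ℝ) : EReal)) atTop := by
          refine limsup_le_limsup ?_
          filter_upwards [hev] with i hi
          exact EReal.coe_le_coe_iff.mpr hi
      _ = (((m : ℝ)⁻¹ * a m : ℝ) : EReal) := hRe.limsup_eq
      _ = c m := rfl
  have hpart2 : limsup u atTop ≤ lyapExp φ (μ : Measure X) := by
    rw [hlyap]
    refine le_liminf_of_le ?_ ?_
    · isBoundedDefault
    · filter_upwards [eventually_ge_atTop 1] with m hm
      exact hupper m hm
  refine ⟨invariance_part T hT ν μ n hmono hconv, hpart2, ?_⟩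
  -- almost additive case
  rintro ⟨C, hC0, halm⟩
  have hXne : Nonempty X := by
    by_contra h
    rw [not_nonempty_iff] at h
    have h1 : (μ : Measure X) Set.univ = 1 := measure_univ
    rw [Set.univ_eq_empty_iff.mpr h, measure_empty] at h1
    exact one_ne_zero h1.symm
  obtain ⟨x0⟩ := hXne
  have hC1 : 1 ≤ C := by
    obtain ⟨hlo, hhi⟩ := halm 1 1 le_rfl le_rfl x0
    have hp : 0 < φ 1 x0 * φ 1 (T^[1] x0) :=
      mul_pos (hpos 1 le_rfl x0) (hpos 1 le_rfl _)
    have h2 : C⁻¹ * (φ 1 x0 * φ 1 (T^[1] x0)) ≤ C * (φ 1 x0 * φ 1 (T^[1] x0)) :=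
      le_trans hlo hhi
    have h3 : C⁻¹ ≤ C := le_of_mul_le_mul_right h2 hp
    have h4 := mul_le_mul_of_nonneg_left h3 hC0.le
    rw [mul_inv_cancel₀ hC0.ne'] at h4
    nlinarith
  have hlogC : 0 ≤ Real.log C := Real.log_nonneg hC1
  have hlower : ∀ m : ℕ, 1 ≤ m →
      (((m : ℝ)⁻¹ * a m - (m : ℝ)⁻¹ * Real.log C : ℝ) : EReal) ≤ liminf u atTop := by
    intro m hm
    obtain ⟨M, hM⟩ := hMex m hm
    have hm' : (0:ℝ) < (m : ℝ) := by exact_mod_cast hm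
    have hev : ∀ᶠ i in atTop, (m : ℝ)⁻¹ * ((n i : ℝ)⁻¹ *
            ∑ k ∈ Finset.range (n i), ∫ x, Real.log (φ m (T^[k] x)) ∂(ν (n i) : Measure X))
          - 5 * M * (n i : ℝ)⁻¹
          - (1 + (m : ℝ) * (n i : ℝ)⁻¹) * ((m : ℝ)⁻¹ * Real.log C)
        ≤ (n i : ℝ)⁻¹ * I i := by
      filter_upwards [hnlarge m] with i hi
      set ρ : Measure X := (ν (n i) : Measure X)
      haveI : IsProbabilityMeasure ρ := (ν (n i)).prop
      have hpt : ∀ x, (∑ k ∈ Finset.range (n i), Real.log (φ m (T^[k] x))) - 5 * m * M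
            - ((n i : ℝ) + m) * Real.log C
          ≤ (m : ℝ) * Real.log (φ (n i) x) :=
        main_lower T φ hpos hC1 (fun m k hm hk x => (halm m k hm hk x).1) m hm hM (n i) hi
      have hintR : Integrable (fun x => (m : ℝ) * Real.log (φ (n i) x)) ρ :=
        (hint_log (n i) (hone i) ρ inferInstance).const_mul _
      have hintL : Integrable (fun x =>
          (∑ k ∈ Finset.range (n i), Real.log (φ m (T^[k] x))) - 5 * m * M
            - ((n i : ℝ) + m) * Real.log C) ρ :=
        ((hint_sum m hm (n i) ρ inferInstance).sub (integrable_const _)).sub (integrable_const _)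
      have hII := integral_mono hintL hintR (fun x => hpt x)
      rw [integral_const_mul] at hII
      have hint1 : Integrable (fun x =>
          (∑ k ∈ Finset.range (n i), Real.log (φ m (T^[k] x))) - 5 * m * M) ρ :=
        (hint_sum m hm (n i) ρ inferInstance).sub (integrable_const _)
      have hfs : ∫ x, (∑ k ∈ Finset.range (n i), Real.log (φ m (T^[k] x))) ∂ρ
          = ∑ k ∈ Finset.range (n i), ∫ x, Real.log (φ m (T^[k] x)) ∂ρ :=
        integral_finset_sum _ (fun k _ =>
          @integrable_cont X _ _ _ _ _ ((hlogc m hm).comp (hT.iterate k)) ρ inferInstance)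
      rw [integral_sub hint1 (integrable_const _),
        integral_sub (hint_sum m hm (n i) ρ inferInstance) (integrable_const _),
        hfs, integral_const, integral_const] at hII
      simp only [measure_univ, ENNReal.toReal_one, probReal_univ, smul_eq_mul, one_mul] at hII
      set S : ℝ := ∑ k ∈ Finset.range (n i), ∫ x, Real.log (φ m (T^[k] x)) ∂ρ
      have hN' := hnpos i
      have e1 : (m : ℝ)⁻¹ * (n i : ℝ)⁻¹ * ((m : ℝ) * I i) = (n i : ℝ)⁻¹ * I i := by
        field_simp
      have e2 : (m : ℝ)⁻¹ * (n i : ℝ)⁻¹ * (S - 5 * m * M - ((n i : ℝ) + m) * Real.log C)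
          = (m : ℝ)⁻¹ * ((n i : ℝ)⁻¹ * S) - 5 * M * (n i : ℝ)⁻¹
            - (1 + (m : ℝ) * (n i : ℝ)⁻¹) * ((m : ℝ)⁻¹ * Real.log C) := by
        field_simp
      have h3 := mul_le_mul_of_nonneg_left hII
        (by positivity : (0:ℝ) ≤ (m : ℝ)⁻¹ * (n i : ℝ)⁻¹)
      rw [e1, e2] at h3
      exact h3
    have hR : Tendsto (fun i => (m : ℝ)⁻¹ * ((n i : ℝ)⁻¹ *
            ∑ k ∈ Finset.range (n i), ∫ x, Real.log (φ m (T^[k] x)) ∂(ν (n i) : Measure X))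
          - 5 * M * (n i : ℝ)⁻¹
          - (1 + (m : ℝ) * (n i : ℝ)⁻¹) * ((m : ℝ)⁻¹ * Real.log C)) atTop
        (𝓝 ((m : ℝ)⁻¹ * a m - 5 * M * 0 - (1 + (m : ℝ) * 0) * ((m : ℝ)⁻¹ * Real.log C))) := by
      have hz : Tendsto (fun i => ((n i : ℝ))⁻¹) atTop (𝓝 0) :=
        (tendsto_inv_atTop_nhds_zero_nat (𝕜 := ℝ)).comp hmono.tendsto_atTop
      exact ((Tendsto.const_mul _ (hA m hm)).sub (Tendsto.const_mul _ hz)).sub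
        (((tendsto_const_nhds.add (Tendsto.const_mul _ hz))).mul_const _)
    have hlim : (m : ℝ)⁻¹ * a m - 5 * M * 0 - (1 + (m : ℝ) * 0) * ((m : ℝ)⁻¹ * Real.log C)
        = (m : ℝ)⁻¹ * a m - (m : ℝ)⁻¹ * Real.log C := by ring
    rw [hlim] at hR
    have hRe := EReal.tendsto_coe.mpr hR
    calc (((m : ℝ)⁻¹ * a m - (m : ℝ)⁻¹ * Real.log C : ℝ) : EReal)
        = liminf (fun i => (((m : ℝ)⁻¹ * ((n i : ℝ)⁻¹ *
            ∑ k ∈ Finset.range (n i), ∫ x, Real.log (φ m (T^[k] x)) ∂(ν (n i) : Measure X))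
          - 5 * M * (n i : ℝ)⁻¹
          - (1 + (m : ℝ) * (n i : ℝ)⁻¹) * ((m : ℝ)⁻¹ * Real.log C) : ℝ) : EReal)) atTop :=
          hRe.liminf_eq.symm
      _ ≤ liminf u atTop := by
          refine liminf_le_liminf ?_
          filter_upwards [hev] with i hi
          exact EReal.coe_le_coe_iff.mpr hi
  -- conclude lyapExp ≤ liminf u
  have hge : lyapExp φ (μ : Measure X) ≤ liminf u atTop := by
    rw [hlyap]
    set L := liminf u atTop with hL
    have hkey : ∀ ε : ℝ, 0 < ε → liminf c atTop ≤ L + (ε : EReal) := by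
      intro ε hε
      have hev : ∀ᶠ m : ℕ in atTop, c m ≤ L + (ε : EReal) := by
        have h1 : Tendsto (fun m : ℕ => (m : ℝ)⁻¹ * Real.log C) atTop (𝓝 0) := by
          simpa using (tendsto_inv_atTop_nhds_zero_nat (𝕜 := ℝ)).mul_const (Real.log C)
        have h2 : ∀ᶠ m : ℕ in atTop, (m : ℝ)⁻¹ * Real.log C ≤ ε :=
          h1.eventually_le_const hε
        filter_upwards [eventually_ge_atTop 1, h2] with m hm hm2
        have hd := hlower m hm
        have hsplit : c m = (((m : ℝ)⁻¹ * a m - (m : ℝ)⁻¹ * Real.log C : ℝ) : EReal)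
            + (((m : ℝ)⁻¹ * Real.log C : ℝ) : EReal) := by
          simp only [hc]
          rw [← EReal.coe_add]
          exact congrArg _ (by ring)
        rw [hsplit]
        exact add_le_add hd (EReal.coe_le_coe_iff.mpr hm2)
      calc liminf c atTop ≤ liminf (fun _ : ℕ => L + (ε : EReal)) atTop :=
            liminf_le_liminf hev
        _ = L + (ε : EReal) := liminf_const _
    refine le_of_forall_gt_imp_ge_of_dense ?_
    intro z hz
    induction z with
    | bot => exact absurd hz not_lt_bot
    | coe z =>
        rcases eq_bot_or_bot_lt L with hLb | hLb
        · have : liminf c atTop ≤ L + (1 : EReal) := hkey 1 one_pos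
          rw [hLb] at this
          simp only [EReal.bot_add] at this
          exact le_trans this (le_trans bot_le (le_of_lt hz))
        · rcases eq_top_or_lt_top L with hLt | hLt
          · rw [hLt] at hz; exact absurd hz (by simp)
          · lift L to ℝ using ⟨ne_of_lt hLt, ne_of_gt hLb⟩ with l
            have hlz : l < z := by exact_mod_cast hz
            have := hkey (z - l) (by linarith)
            calc liminf c atTop ≤ (l : EReal) + ((z - l : ℝ) : EReal) := this
              _ = ((z : ℝ) : EReal) := by rw [← EReal.coe_add]; norm_num
    | top => exact le_top
  exact tendsto_of_le_liminf_of_limsup_le hge hpart2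
end

section
/- Let Φ = {log φ_n}_{n≥1} be an almost additive potential over (X,T). Then for every ε > 0 there exists δ > 0 such that for all μ, ν ∈ M(X,T) with dist(μ,ν) < δ one has |χ(μ,Φ) − χ(ν,Φ)| < ε; i.e. μ ↦ χ(μ,Φ) is (uniformly) continuous on M(X,T) in the weak* topology. -/
open MeasureTheory Filter Topology
open scoped ENNReal

private lemma auxMapIterate {X : Type*} [MeasurableSpace X] [TopologicalSpace X] [BorelSpace X]
    {T : X → X} (hT : Continuous T) {μ : Measure X} (hμ : μ.map T = μ) (m : ℕ) :
    μ.map (T^[m]) = μ := by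
  induction m with
  | zero => simp
  | succ m ih =>
    rw [Function.iterate_succ, ← Measure.map_map (hT.iterate m).measurable hT.measurable, hμ, ih]

private lemma auxIntegralIterate {X : Type*} [MeasurableSpace X] [TopologicalSpace X]
    [BorelSpace X] {T : X → X} (hT : Continuous T) {μ : Measure X} (hμ : μ.map T = μ)
    {g : X → ℝ} (hg : Continuous g) (m : ℕ) :
    ∫ x, g (T^[m] x) ∂μ = ∫ x, g x ∂μ := by
  conv_rhs => rw [← auxMapIterate hT hμ m]
  rw [integral_map (hT.iterate m).measurable.aemeasurable hg.aestronglyMeasurable]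

private noncomputable def lyapAvg {X : Type*} [MeasurableSpace X] (φ : ℕ → X → ℝ) (n : ℕ)
    (ν : MeasureTheory.ProbabilityMeasure X) : ℝ :=
  ∫ x, Real.log (φ n x) ∂(ν : MeasureTheory.Measure X)

private noncomputable def lyapInfSeq {X : Type*} [MeasurableSpace X] (φ : ℕ → X → ℝ) (C : ℝ)
    (ν : MeasureTheory.ProbabilityMeasure X) : ℝ :=
  sInf ((fun n : ℕ => (lyapAvg φ n ν + Real.log C) / n) '' Set.Ici 1)

/-- **Lemma 3.3 ([FH10, Lemma A.4]).** For an almost additive potential `Φ = {log φ_n}` over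
`(X, T)`, the Lyapunov exponent map `μ ↦ χ(μ, Φ)` is continuous on `M(X,T)` in the weak*
topology (equivalently, for every `ε > 0` there is `δ > 0` such that invariant measures at
`dist < δ` for a compatible metric have Lyapunov exponents within `ε`; note that `M(X,T)` is
compact and metrizable, so continuity and uniform continuity agree). -/
theorem lyapExp_continuousOn_of_almostAdditive
    {X : Type*} [MetricSpace X] [CompactSpace X] [MeasurableSpace X] [BorelSpace X]
    (T : X → X) (hT : Continuous T)
    (φ : ℕ → X → ℝ)
    (hcont : ∀ n, 1 ≤ n → Continuous (φ n))
    (hpos : ∀ n, 1 ≤ n → ∀ x, 0 < φ n x)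
    (C : ℝ) (hC : 0 < C)
    (hadd : ∀ m n, 1 ≤ m → 1 ≤ n → ∀ x,
      C⁻¹ * (φ m x * φ n (T^[m] x)) ≤ φ (m + n) x ∧
        φ (m + n) x ≤ C * (φ m x * φ n (T^[m] x))) :
    ContinuousOn (fun μ : ProbabilityMeasure X => lyapExp φ (μ : Measure X))
      {μ : ProbabilityMeasure X | (μ : Measure X).map T = (μ : Measure X)} := by
  set S : Set (ProbabilityMeasure X) :=
    {μ : ProbabilityMeasure X | (μ : Measure X).map T = (μ : Measure X)} with hS
  intro μ₀ hμ₀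
  -- X is nonempty since it carries a probability measure
  have hXne : Nonempty X := μ₀.nonempty
  obtain ⟨x₀⟩ := hXne
  -- C ≥ 1
  have hC1 : 1 ≤ C := by
    obtain ⟨h1, h2⟩ := hadd 1 1 le_rfl le_rfl x₀
    have hp : 0 < φ 1 x₀ * φ 1 (T^[1] x₀) :=
      mul_pos (hpos 1 le_rfl _) (hpos 1 le_rfl _)
    have h3 : C⁻¹ * (φ 1 x₀ * φ 1 (T^[1] x₀)) ≤ C * (φ 1 x₀ * φ 1 (T^[1] x₀)) :=
      le_trans h1 h2
    have h4 : C⁻¹ ≤ C := le_of_mul_le_mul_right h3 hp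
    have h5 : C⁻¹ * C ≤ C * C := mul_le_mul_of_nonneg_right h4 hC.le
    rw [inv_mul_cancel₀ hC.ne'] at h5
    nlinarith
  set L : ℝ := Real.log C with hLdef
  have hL : 0 ≤ L := Real.log_nonneg hC1
  set a : ℕ → ProbabilityMeasure X → ℝ := lyapAvg φ with hadef
  set ℓ : ProbabilityMeasure X → ℝ := lyapInfSeq φ C with hldef
  have hφc : ∀ k, 1 ≤ k → Continuous fun x => Real.log (φ k x) := fun k hk =>
    (hcont k hk).log fun x => (hpos k hk x).ne'
  have hint : ∀ k, 1 ≤ k → ∀ ν : ProbabilityMeasure X,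
      Integrable (fun x => Real.log (φ k x)) (ν : Measure X) := fun k hk ν =>
    (BoundedContinuousFunction.mkOfCompact ⟨_, hφc k hk⟩).integrable _
  have ha_cont : ∀ k, 1 ≤ k → Continuous (a k) := fun k hk =>
    MeasureTheory.ProbabilityMeasure.continuous_integral_boundedContinuousFunction
      (BoundedContinuousFunction.mkOfCompact ⟨_, hφc k hk⟩)
  -- two-sided subadditivity of the integrals for invariant measures
  have subadd : ∀ ν : ProbabilityMeasure X, ν ∈ S → ∀ m n : ℕ, 1 ≤ m → 1 ≤ n →
      a m ν + a n ν - L ≤ a (m + n) ν ∧ a (m + n) ν ≤ a m ν + a n ν + L := by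
    intro ν hν m n hm hn
    have hν' : (ν : Measure X).map T = (ν : Measure X) := hν
    have hcc : Continuous fun x => Real.log (φ n (T^[m] x)) := (hφc n hn).comp (hT.iterate m)
    have hci : Integrable (fun x => Real.log (φ n (T^[m] x))) (ν : Measure X) :=
      (BoundedContinuousFunction.mkOfCompact ⟨_, hcc⟩).integrable _
    have hce : ∫ x, Real.log (φ n (T^[m] x)) ∂(ν : Measure X) = a n ν :=
      auxIntegralIterate hT hν' (hφc n hn) m
    have hmn : (1 : ℕ) ≤ m + n := le_trans hm (Nat.le_add_right _ _)
    have hub : ∀ x, Real.log (φ (m + n) x)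
        ≤ Real.log (φ m x) + Real.log (φ n (T^[m] x)) + L := by
      intro x
      have h2 := (hadd m n hm hn x).2
      have hpm := hpos m hm x
      have hpn := hpos n hn (T^[m] x)
      have hpmn := hpos (m + n) hmn x
      calc Real.log (φ (m + n) x) ≤ Real.log (C * (φ m x * φ n (T^[m] x))) :=
            Real.log_le_log hpmn h2
        _ = L + (Real.log (φ m x) + Real.log (φ n (T^[m] x))) := by
            rw [Real.log_mul hC.ne' (mul_pos hpm hpn).ne', Real.log_mul hpm.ne' hpn.ne']
        _ = _ := by ring
    have hlb : ∀ x, Real.log (φ m x) + Real.log (φ n (T^[m] x)) - L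
        ≤ Real.log (φ (m + n) x) := by
      intro x
      have h1 := (hadd m n hm hn x).1
      have hpm := hpos m hm x
      have hpn := hpos n hn (T^[m] x)
      have hpmn := hpos (m + n) hmn x
      have hpp : 0 < C⁻¹ * (φ m x * φ n (T^[m] x)) := by positivity
      calc Real.log (φ m x) + Real.log (φ n (T^[m] x)) - L
          = Real.log (C⁻¹ * (φ m x * φ n (T^[m] x))) := by
            rw [Real.log_mul (inv_ne_zero hC.ne') (mul_pos hpm hpn).ne',
              Real.log_mul hpm.ne' hpn.ne', Real.log_inv]
            ring
        _ ≤ Real.log (φ (m + n) x) := Real.log_le_log hpp h1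
    have hint2 : Integrable (fun x => Real.log (φ m x) + Real.log (φ n (T^[m] x)))
        (ν : Measure X) := (hint m hm ν).add hci
    have hsum : ∫ x, (Real.log (φ m x) + Real.log (φ n (T^[m] x))) ∂(ν : Measure X)
        = a m ν + a n ν := by
      rw [integral_add (hint m hm ν) hci, hce]
      simp [hadef, lyapAvg]
    constructor
    · have h := integral_mono
        (f := fun x => Real.log (φ m x) + Real.log (φ n (T^[m] x)) - L)
        (g := fun x => Real.log (φ (m + n) x))
        (hint2.sub (integrable_const L)) (hint (m + n) hmn ν) hlb
      beta_reduce at h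
      rw [integral_sub hint2 (integrable_const L), hsum,
        integral_const] at h
      simp only [measure_univ, probReal_univ, ENNReal.toReal_one, one_smul] at h
      simpa [hadef, lyapAvg] using h
    · have h := integral_mono (hint (m + n) hmn ν)
        (f := fun x => Real.log (φ (m + n) x))
        (g := fun x => Real.log (φ m x) + Real.log (φ n (T^[m] x)) + L)
        (hint2.add (integrable_const L)) hub
      beta_reduce at h
      rw [integral_add hint2 (integrable_const L), hsum,
        integral_const] at h
      simp only [measure_univ, probReal_univ, ENNReal.toReal_one, one_smul] at h
      simpa [hadef, lyapAvg] using h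
  -- iterated bounds
  have mult : ∀ ν : ProbabilityMeasure X, ν ∈ S → ∀ N : ℕ, 1 ≤ N → ∀ k : ℕ, 1 ≤ k →
      (k : ℝ) * a N ν - k * L ≤ a (k * N) ν ∧ a (k * N) ν ≤ (k : ℝ) * a N ν + k * L := by
    intro ν hν N hN k hk
    induction k with
    | zero => omega
    | succ k ih =>
      rcases Nat.eq_zero_or_pos k with rfl | hk1
      · simp only [Nat.zero_add, zero_add, one_mul, Nat.cast_one]
        exact ⟨by linarith, by linarith⟩
      · obtain ⟨ih1, ih2⟩ := ih hk1
        obtain ⟨hs1, hs2⟩ := subadd ν hν (k * N) N (Nat.mul_pos hk1 hN) hN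
        have hkn : (k + 1) * N = k * N + N := by ring
        rw [hkn]
        push_cast
        constructor <;> nlinarith
  -- cross inequality
  have cross : ∀ ν : ProbabilityMeasure X, ν ∈ S → ∀ m n : ℕ, 1 ≤ m → 1 ≤ n →
      (a m ν - L) / m ≤ (a n ν + L) / n := by
    intro ν hν m n hm hn
    have h1 := (mult ν hν m hm n hn).1
    have h2 := (mult ν hν n hn m hm).2
    rw [Nat.mul_comm n m] at h1
    have hm0 : (0 : ℝ) < m := by exact_mod_cast hm
    have hn0 : (0 : ℝ) < n := by exact_mod_cast hn
    rw [div_le_div_iff₀ hm0 hn0]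
    nlinarith
  -- bounds on ℓ
  have hbddB : ∀ ν : ProbabilityMeasure X, ν ∈ S →
      BddBelow ((fun n : ℕ => (a n ν + L) / n) '' Set.Ici 1) := by
    intro ν hν
    refine ⟨(a 1 ν - L) / ((1:ℕ):ℝ), ?_⟩
    rintro x ⟨n, hn, rfl⟩
    exact cross ν hν 1 n le_rfl (Set.mem_Ici.mp hn)
  have hupper : ∀ ν : ProbabilityMeasure X, ν ∈ S → ∀ N : ℕ, 1 ≤ N →
      ℓ ν ≤ (a N ν + L) / N := by
    intro ν hν N hN
    exact csInf_le (hbddB ν hν) ⟨N, Set.mem_Ici.mpr hN, rfl⟩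
  have hlower : ∀ ν : ProbabilityMeasure X, ν ∈ S → ∀ N : ℕ, 1 ≤ N →
      (a N ν - L) / N ≤ ℓ ν := by
    intro ν hν N hN
    refine le_csInf ⟨_, ⟨1, Set.self_mem_Ici, rfl⟩⟩ ?_
    rintro x ⟨n, hn, rfl⟩
    exact cross ν hν N n hN (Set.mem_Ici.mp hn)
  -- Fekete: convergence to ℓ
  have hlim : ∀ ν : ProbabilityMeasure X, ν ∈ S →
      Tendsto (fun n : ℕ => a n ν / n) atTop (𝓝 (ℓ ν)) := by
    intro ν hν
    set u : ℕ → ℝ := fun n => if n = 0 then 0 else a n ν + L with hu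
    have hsub : Subadditive u := by
      intro m n
      rcases Nat.eq_zero_or_pos m with rfl | hm
      · simp [hu]
      rcases Nat.eq_zero_or_pos n with rfl | hn
      · simp [hu]
      have h := (subadd ν hν m n hm hn).2
      simp only [hu, if_neg (by omega : ¬ m + n = 0), if_neg (by omega : ¬ m = 0),
        if_neg (by omega : ¬ n = 0)]
      linarith
    have hbdd : BddBelow (Set.range fun n : ℕ => u n / n) := by
      refine ⟨min 0 (a 1 ν - L), ?_⟩
      rintro x ⟨n, rfl⟩
      rcases Nat.eq_zero_or_pos n with rfl | hn
      · simp [hu]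
      · have hc := cross ν hν 1 n le_rfl hn
        simp only [hu, if_neg (by omega : ¬ n = 0)]
        calc min 0 (a 1 ν - L) ≤ (a 1 ν - L) / ((1:ℕ):ℝ) := by
              simp only [Nat.cast_one, div_one]
              exact min_le_right 0 (a 1 ν - L)
          _ ≤ (a n ν + L) / n := hc
    have hlimeq : hsub.lim = ℓ ν := by
      rw [Subadditive.lim]
      show sInf _ = sInf _
      congr 1
      apply Set.image_congr
      intro n hn
      have : ¬ n = 0 := by
        simp only [Set.mem_Ici] at hn; omega
      simp [hu, this, hadef, hLdef]
    have ht := hsub.tendsto_lim hbdd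
    rw [hlimeq] at ht
    have ht2 : Tendsto (fun n : ℕ => u n / n - L / n) atTop (𝓝 (ℓ ν - 0)) :=
      ht.sub (tendsto_const_div_atTop_nhds_zero_nat L)
    rw [sub_zero] at ht2
    refine Tendsto.congr' ?_ ht2
    filter_upwards [eventually_ge_atTop 1] with n hn
    simp only [hu, if_neg (by omega : ¬ n = 0)]
    rw [div_sub_div_same, add_sub_cancel_right]
  -- identification of lyapExp with ℓ on S
  have hlyap : ∀ ν : ProbabilityMeasure X, ν ∈ S →
      lyapExp φ (ν : Measure X) = ((ℓ ν : ℝ) : EReal) := by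
    intro ν hν
    have h1 : Tendsto (fun n : ℕ =>
        (((n : ℝ)⁻¹ * ∫ x, Real.log (φ n x) ∂(ν : Measure X) : ℝ) : EReal)) atTop
        (𝓝 ((ℓ ν : ℝ) : EReal)) := by
      rw [EReal.tendsto_coe]
      refine (hlim ν hν).congr fun n => ?_
      rw [div_eq_inv_mul]
      rfl
    simpa [lyapExp] using h1.liminf_eq
  -- continuity of ℓ within S at μ₀
  have hℓcont : Tendsto ℓ (𝓝[S] μ₀) (𝓝 (ℓ μ₀)) := by
    rw [Metric.tendsto_nhds]
    intro ε hε
    obtain ⟨n₀, hn₀⟩ := exists_nat_gt (4 * L / ε)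
    set N : ℕ := max n₀ 1 with hN
    have hN1 : 1 ≤ N := le_max_right _ _
    have hN0 : (0 : ℝ) < N := by exact_mod_cast hN1
    have hNL : 4 * L < N * ε := by
      have h1 : 4 * L / ε < (N : ℝ) := lt_of_lt_of_le hn₀ (by exact_mod_cast le_max_left _ _)
      calc 4 * L = 4 * L / ε * ε := by field_simp
        _ < N * ε := by exact mul_lt_mul_of_pos_right h1 hε
    have haN : Tendsto (a N) (𝓝[S] μ₀) (𝓝 (a N μ₀)) :=
      (((ha_cont N hN1).tendsto μ₀).mono_left nhdsWithin_le_nhds)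
    have he1 : ∀ᶠ ν in 𝓝[S] μ₀, |a N ν - a N μ₀| < ε / 4 * N :=
      haN.eventually (eventually_abs_sub_lt _ (by positivity))
    filter_upwards [he1, self_mem_nhdsWithin] with ν hν1 hν2
    have b1 := hupper ν hν2 N hN1
    have b2 := hlower ν hν2 N hN1
    have b3 := hupper μ₀ hμ₀ N hN1
    have b4 := hlower μ₀ hμ₀ N hN1
    rw [div_le_iff₀ hN0] at b2 b4
    rw [le_div_iff₀ hN0] at b1 b3
    rw [abs_sub_lt_iff] at hν1
    obtain ⟨c1, c2⟩ := hν1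
    rw [Real.dist_eq, abs_sub_lt_iff]
    constructor <;> nlinarith [mul_pos hN0 hε]
  -- assemble
  have hfin : ContinuousWithinAt (fun ν : ProbabilityMeasure X => ((ℓ ν : ℝ) : EReal)) S μ₀ :=
    (continuous_coe_real_ereal.tendsto _).comp hℓcont
  refine ContinuousWithinAt.congr hfin (fun ν hν => hlyap ν hν) (hlyap μ₀ hμ₀)
end
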